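/- arXiv:2201.11832 — 8 statements merged into one kernel-verified Lean document; each statement's English description precedes it below -/
import Mathlib

section
/- Let H^X, H^Y, H^Y', H^Z be finite-dimensional complex Hilbert spaces with fixed orthonormal computational bases. For every operator A ∈ L(H^X ⊗ H^Y), every operator B ∈ L(H^Y ⊗ H^Z), and every unitary U : H^Y → H^{Y'}, one has (A * |U⟩⟩⟨⟨U|) * (|U†⟩⟩⟨⟨U†| * B) = A * B, where the first two link products are taken over H^Y and the middle one over H^{Y'}. -/
open Matrix

/-- The pure Choi representation `|V⟩⟩ := Σ_i |i⟩^Y ⊗ V|i⟩^Y ∈ H^Y ⊗ H^Z` of a linear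
map `V : H^Y → H^Z`, given as a matrix indexed by `Z × Y`. -/
def choiV {Y Z : Type*} (V : Matrix Z Y ℂ) : Y × Z → ℂ := fun p => V p.2 p.1

/-- The rank-one operator `|V⟩⟩⟨⟨V|` associated to the pure Choi vector of `V`. -/
noncomputable def choiProj {Y Z : Type*} (V : Matrix Z Y ℂ) : Matrix (Y × Z) (Y × Z) ℂ :=
  fun p q => choiV V p * star (choiV V q)

/-- The link product of operators `A ∈ L(H^X ⊗ H^Y)` and `B ∈ L(H^Y ⊗ H^Z)` over the
shared factor `H^Y`:
`A * B := Σ_{i,i'} ((𝟙^X ⊗ ⟨i|^Y) A (𝟙^X ⊗ |i'⟩^Y)) ⊗ ((⟨i|^Y ⊗ 𝟙^Z) B (|i'⟩^Y ⊗ 𝟙^Z))`. -/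
noncomputable def linkM {X Y Z : Type*} [Fintype Y]
    (A : Matrix (X × Y) (X × Y) ℂ) (B : Matrix (Y × Z) (Y × Z) ℂ) :
    Matrix (X × Z) (X × Z) ℂ :=
  fun p q => ∑ i : Y, ∑ i' : Y, A (p.1, i) (q.1, i') * B (i, p.2) (i', q.2)

/-- for every operator `A ∈ L(H^X ⊗ H^Y)`, every operator
`B ∈ L(H^Y ⊗ H^Z)` and every unitary `U : H^Y → H^{Y'}`, one has
`(A * |U⟩⟩⟨⟨U|) * (|U†⟩⟩⟨⟨U†| * B) = A * B`, where the first two link products are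
taken over `H^Y` and the middle one over `H^{Y'}`. -/
theorem link_product_unitary_cancel_mixed
    {X Y Y' Z : Type*} [Fintype X] [Fintype Y] [Fintype Y'] [Fintype Z]
    [DecidableEq Y] [DecidableEq Y']
    (A : Matrix (X × Y) (X × Y) ℂ) (B : Matrix (Y × Z) (Y × Z) ℂ)
    (U : Matrix Y' Y ℂ) (hU₁ : Uᴴ * U = 1) (hU₂ : U * Uᴴ = 1) :
    linkM (linkM A (choiProj U)) (linkM (choiProj Uᴴ) B) = linkM A B := by
  have key : ∀ i k : Y, ∑ j : Y', star (U j i) * U j k = if i = k then 1 else 0 := by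
    intro i k
    have := congrFun (congrFun hU₁ i) k
    simpa [Matrix.mul_apply, Matrix.conjTranspose_apply, Matrix.one_apply] using this
  funext p q
  simp only [linkM, choiProj, choiV, Matrix.conjTranspose_apply, star_star,
    Finset.sum_mul, Finset.mul_sum]
  rw [Finset.sum_comm]
  -- goal: ∑ y x x3 i x1 x2, A (p.1,x3) (q.1,i) * (U x x3 * star (U y i)) *
  --        (star (U x x1) * U y x2 * B (x1,p.2) (x2,q.2)) = ∑ i i', A * B
  conv_lhs => enter [2,y]; rw [Finset.sum_comm]
  conv_lhs => enter [2,y,2,x3]; rw [Finset.sum_comm]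
  conv_lhs => enter [2,y,2,x3,2,i]; rw [Finset.sum_comm]
  conv_lhs => enter [2,y,2,x3,2,i,2,x1]; rw [Finset.sum_comm]
  rw [Finset.sum_comm]
  conv_lhs => enter [2,x3]; rw [Finset.sum_comm]
  conv_lhs => enter [2,x3,2,i]; rw [Finset.sum_comm]
  conv_lhs => enter [2,x3,2,i,2,x1]; rw [Finset.sum_comm]
  have inner : ∀ x3 i x1 x2 : Y,
      (∑ y : Y', ∑ x : Y', A (p.1, x3) (q.1, i) * (U x x3 * star (U y i)) *
        (star (U x x1) * U y x2 * B (x1, p.2) (x2, q.2))) =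
      A (p.1, x3) (q.1, i) * B (x1, p.2) (x2, q.2) *
        ((if x1 = x3 then (1:ℂ) else 0) * (if i = x2 then (1:ℂ) else 0)) := by
    intro x3 i x1 x2
    rw [← key x1 x3, ← key i x2]
    simp only [Finset.mul_sum, Finset.sum_mul]
    refine Finset.sum_congr rfl fun y _ => Finset.sum_congr rfl fun x _ => by ring
  simp only [inner]
  simp [Finset.sum_ite_eq, Finset.sum_ite_eq', mul_ite, ite_mul, Finset.mul_sum]
end

section
/- Let U : H^{P_O} ⊗ H^{A_O} ⊗ H^{B_O} → H^{F_I} ⊗ H^{A_I} ⊗ H^{B_I} be a unitary admitting a factorization |U⟩⟩ = |U₁⟩⟩ * |𝟙⟩⟩^{ZZ̄} * |U₂⟩⟩ with unitaries U₁ : H^{A_O} ⊗ H^{P_O} → H^{B_I} ⊗ H^Z and U₂ : H^{B_O} ⊗ H^{Z̄} → H^{A_I} ⊗ H^{F_I}, where H^Z and H^{Z̄} are isomorphic finite-dimensional spaces. Let U_B : H^{B_I} ⊗ H^{B_I'} → H^{B_O} ⊗ H^{B_O'} be unitary, and let ω₁ : H^{B_I'} ⊗ H^{P_O} → H^{A_I}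 ⊗ H^E and ω₂ : H^{A_O} ⊗ H^E → H^{B_O'} ⊗ H^{F_I} be linear maps satisfying |ω₁⟩⟩ * |ω₂⟩⟩ = |U⟩⟩ * |U_B⟩⟩ (contracting H^E on the left and H^{B_I}, H^{B_O} on the right). Then |U₁†⟩⟩ * (|ω₁⟩⟩ * |ω₂⟩⟩) * |U₂†⟩⟩ = |U_B⟩⟩ ⊗ |𝟙⟩⟩^{ZZ̄}, where the outer link products contract H^{A_O}, H^{P_O} and H^{A_I}, H^{F_I} respectively. -/
open Matrix

open scoped Kronecker

/-! Fix the indices `bi'` and `bo'`. The link product `|ω₁⟩⟩ * |ω₂⟩⟩`, read as a matrix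
from `H^{A_O} ⊗ H^{P_O}` to `H^{A_I} ⊗ H^{F_I}`, equals `|U⟩⟩ * |U_B⟩⟩`, and inserting the
factorization of `U` turns this into `U₂ (M ⊗ 𝟙_Z) U₁`, where `M` is the corresponding slice of
`U_B`. Linking with `|U₁†⟩⟩` and `|U₂†⟩⟩` is conjugation `W ↦ U₂† W U₁†`, which by unitarity of
`U₁` and `U₂` strips off the outer factors and leaves `M ⊗ 𝟙_Z`. -/

theorem Matrix.mul_mul_mul_mul_eq_of_mul_eq_one {α m n p q : Type*} [Semiring α]
    [Fintype m] [Fintype n] [Fintype p] [Fintype q] [DecidableEq p] [DecidableEq q]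
    {L : Matrix p m α} {A : Matrix m p α} {N : Matrix p q α} {B : Matrix q n α}
    {R : Matrix n q α} (hA : L * A = 1) (hB : B * R = 1) : L * (A * N * B) * R = N := by
  simp only [Matrix.mul_assoc, hB, Matrix.mul_one, ← Matrix.mul_assoc L, hA, Matrix.one_mul]

theorem Matrix.conjTranspose_mul_mul_conjTranspose_apply {α l m n k : Type*} [CommSemiring α]
    [StarRing α] [Fintype m] [Fintype k]
    (A : Matrix m l α) (W : Matrix m k α) (B : Matrix n k α) (i : l) (j : n) :
    (Aᴴ * W * Bᴴ) i j = ∑ y, ∑ x, star (B j y) * W x y * star (A x i) := by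
  simp only [mul_apply, conjTranspose_apply, Finset.sum_mul]
  exact Finset.sum_congr rfl fun _ _ => Finset.sum_congr rfl fun _ _ => by ring

theorem sum_sum_link_mul_eq_mul_kronecker_one_mul {R aO pO bO bI aI fI Z : Type*}
    [CommSemiring R] [Fintype bO] [Fintype bI] [Fintype Z] [DecidableEq Z]
    (U₁ : Matrix (bI × Z) (aO × pO) R) (U₂ : Matrix (aI × fI) (bO × Z) R)
    (M : Matrix bO bI R)
    (ai : aI) (f : fI) (ao : aO) (p : pO) :
    ∑ bi, ∑ bo, (∑ z, U₁ (bi, z) (ao, p) * U₂ (ai, f) (bo, z)) * M bo bi =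
      (U₂ * (M ⊗ₖ (1 : Matrix Z Z R)) * U₁) (ai, f) (ao, p) := by
  simp only [mul_apply, Fintype.sum_prod_type, kronecker_apply, one_apply, mul_ite, mul_one,
    mul_zero, ite_mul, zero_mul, Finset.sum_ite_eq', Finset.mem_univ, if_true, Finset.sum_mul]
  refine Finset.sum_congr rfl fun bi _ => Finset.sum_comm.trans ?_
  exact Finset.sum_congr rfl fun z _ => Finset.sum_congr rfl fun bo _ => by ring

/-- All spaces carry fixed computational bases; maps are represented by matrices (output
index first), pure Choi vectors by their matrix entries, and link products by sums over
the contracted computational-basis indices. `H^Z` and `H^{Z̄}` being isomorphic with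
canonical basis identification, they are modelled by a common index type `Z`. -/
theorem bipartite_time_delocalised_subsystems_general
    {pO aO bO fI aI bI bI' bO' Z E : Type*}
    [Fintype pO] [Fintype aO] [Fintype bO] [Fintype fI] [Fintype aI] [Fintype bI]
    [Fintype Z] [Fintype E] [DecidableEq bO] [DecidableEq bI] [DecidableEq Z]
    (U : Matrix (fI × aI × bI) (pO × aO × bO) ℂ)
    (U₁ : Matrix (bI × Z) (aO × pO) ℂ)
    (hU₁₂ : U₁ * U₁ᴴ = 1)
    (U₂ : Matrix (aI × fI) (bO × Z) ℂ)
    (hU₂₁ : U₂ᴴ * U₂ = 1)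
    (hdecomp : ∀ (f : fI) (ai : aI) (bi : bI) (p : pO) (ao : aO) (bo : bO),
      U (f, ai, bi) (p, ao, bo) = ∑ z : Z, U₁ (bi, z) (ao, p) * U₂ (ai, f) (bo, z))
    (UB : Matrix (bO × bO') (bI × bI') ℂ)
    (ω₁ : Matrix (aI × E) (bI' × pO) ℂ) (ω₂ : Matrix (bO' × fI) (aO × E) ℂ)
    (hω : ∀ (bi' : bI') (p : pO) (ai : aI) (ao : aO) (bo' : bO') (f : fI),
      (∑ e : E, ω₁ (ai, e) (bi', p) * ω₂ (bo', f) (ao, e)) =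
        ∑ bi : bI, ∑ bo : bO, U (f, ai, bi) (p, ao, bo) * UB (bo, bo') (bi, bi')) :
    ∀ (bi : bI) (z : Z) (bi' : bI') (bo : bO) (z' : Z) (bo' : bO'),
      (∑ ao : aO, ∑ p : pO, ∑ ai : aI, ∑ f : fI,
          star (U₁ (bi, z) (ao, p))
            * (∑ e : E, ω₁ (ai, e) (bi', p) * ω₂ (bo', f) (ao, e))
            * star (U₂ (ai, f) (bo, z')))
        = UB (bo, bo') (bi, bi') * (if z = z' then 1 else 0) := by
  intro bi z bi' bo z' bo'
  let M : Matrix bO bI ℂ := fun bo bi => UB (bo, bo') (bi, bi')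
  let W : Matrix (aI × fI) (aO × pO) ℂ := fun x y =>
    ∑ e, ω₁ (x.1, e) (bi', y.2) * ω₂ (bo', x.2) (y.1, e)
  have hW : W = U₂ * (M ⊗ₖ (1 : Matrix Z Z ℂ)) * U₁ := by
    ext ⟨ai, f⟩ ⟨ao, p⟩
    simp only [W, M, hω, hdecomp]
    exact sum_sum_link_mul_eq_mul_kronecker_one_mul U₁ U₂ M ai f ao p
  have hconj : U₂ᴴ * W * U₁ᴴ = M ⊗ₖ (1 : Matrix Z Z ℂ) := by
    rw [hW]
    exact mul_mul_mul_mul_eq_of_mul_eq_one hU₂₁ hU₁₂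
  have hentry := congrFun (congrFun hconj (bo, z')) (bi, z)
  rw [conjTranspose_mul_mul_conjTranspose_apply, kronecker_apply, one_apply] at hentry
  simpa only [Fintype.sum_prod_type, eq_comm] using hentry

/-- let `U : H^{P_O} ⊗ H^{A_O} ⊗ H^{B_O} → H^{F_I} ⊗ H^{A_I} ⊗ H^{B_I}` be a
unitary admitting a factorization `|U⟩⟩ = |U₁⟩⟩ * |𝟙⟩⟩^{ZZ̄} * |U₂⟩⟩` with unitaries
`U₁ : H^{A_O} ⊗ H^{P_O} → H^{B_I} ⊗ H^Z` and `U₂ : H^{B_O} ⊗ H^{Z̄} → H^{A_I} ⊗ H^{F_I}`.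
Let `U_B : H^{B_I} ⊗ H^{B_I'} → H^{B_O} ⊗ H^{B_O'}` be unitary and let
`ω₁ : H^{B_I'} ⊗ H^{P_O} → H^{A_I} ⊗ H^E`, `ω₂ : H^{A_O} ⊗ H^E → H^{B_O'} ⊗ H^{F_I}` be
linear maps with `|ω₁⟩⟩ * |ω₂⟩⟩ = |U⟩⟩ * |U_B⟩⟩` (contracting `H^E` on the left, and
`H^{B_I}`, `H^{B_O}` on the right). Then
`|U₁†⟩⟩ * (|ω₁⟩⟩ * |ω₂⟩⟩) * |U₂†⟩⟩ = |U_B⟩⟩ ⊗ |𝟙⟩⟩^{ZZ̄}`, where the outer link products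
contract `H^{A_O}, H^{P_O}` and `H^{A_I}, H^{F_I}` respectively.

All spaces carry fixed computational bases; maps are represented by matrices (output
index first), pure Choi vectors by their matrix entries, and link products by sums over
the contracted computational-basis indices. `H^Z` and `H^{Z̄}` being isomorphic with
canonical basis identification, they are modelled by a common index type `Z`. -/
theorem bipartite_time_delocalised_subsystems
    {pO aO bO fI aI bI bI' bO' Z E : Type*}
    [Fintype pO] [Fintype aO] [Fintype bO] [Fintype fI] [Fintype aI] [Fintype bI]
    [Fintype bI'] [Fintype bO'] [Fintype Z] [Fintype E]
    [DecidableEq pO] [DecidableEq aO] [DecidableEq bO] [DecidableEq fI]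
    [DecidableEq aI] [DecidableEq bI] [DecidableEq bI'] [DecidableEq bO'] [DecidableEq Z]
    (U : Matrix (fI × aI × bI) (pO × aO × bO) ℂ)
    (hU₁ : Uᴴ * U = 1) (hU₂ : U * Uᴴ = 1)
    (U₁ : Matrix (bI × Z) (aO × pO) ℂ)
    (hU₁₁ : U₁ᴴ * U₁ = 1) (hU₁₂ : U₁ * U₁ᴴ = 1)
    (U₂ : Matrix (aI × fI) (bO × Z) ℂ)
    (hU₂₁ : U₂ᴴ * U₂ = 1) (hU₂₂ : U₂ * U₂ᴴ = 1)
    (hdecomp : ∀ (f : fI) (ai : aI) (bi : bI) (p : pO) (ao : aO) (bo : bO),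
      U (f, ai, bi) (p, ao, bo) = ∑ z : Z, U₁ (bi, z) (ao, p) * U₂ (ai, f) (bo, z))
    (UB : Matrix (bO × bO') (bI × bI') ℂ)
    (hUB₁ : UBᴴ * UB = 1) (hUB₂ : UB * UBᴴ = 1)
    (ω₁ : Matrix (aI × E) (bI' × pO) ℂ) (ω₂ : Matrix (bO' × fI) (aO × E) ℂ)
    (hω : ∀ (bi' : bI') (p : pO) (ai : aI) (ao : aO) (bo' : bO') (f : fI),
      (∑ e : E, ω₁ (ai, e) (bi', p) * ω₂ (bo', f) (ao, e)) =
        ∑ bi : bI, ∑ bo : bO, U (f, ai, bi) (p, ao, bo) * UB (bo, bo') (bi, bi')) :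
    ∀ (bi : bI) (z : Z) (bi' : bI') (bo : bO) (z' : Z) (bo' : bO'),
      (∑ ao : aO, ∑ p : pO, ∑ ai : aI, ∑ f : fI,
          star (U₁ (bi, z) (ao, p))
            * (∑ e : E, ω₁ (ai, e) (bi', p) * ω₂ (bo', f) (ao, e))
            * star (U₂ (ai, f) (bo, z')))
        = UB (bo, bo') (bi, bi') * (if z = z' then 1 else 0) :=
  bipartite_time_delocalised_subsystems_general U U₁ hU₁₂ U₂ hU₂₁ hdecomp UB ω₁ ω₂ hω
end

section
/- Let U : H^{P_O} ⊗ H^{A_O} ⊗ H^{B_O} → H^{F_I} ⊗ H^{A_I} ⊗ H^{B_I} be a unitary admitting a factorization |U⟩⟩ = |U₁⟩⟩ * |𝟙⟩⟩^{ZZ̄} * |U₂⟩⟩ with unitaries U₁ : H^{A_O} ⊗ H^{P_O} → H^{B_I} ⊗ H^Z and U₂ : H^{B_O} ⊗ H^{Z̄} → H^{A_I} ⊗ H^{F_I}, where H^Z and H^{Z̄} are isomorphic. Then for all unitaries U_A : H^{A_I} ⊗ H^{A_I'} → H^{A_O} ⊗ H^{A_O'} and U_B : H^{B_I} ⊗ H^{B_I'}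 → H^{B_O} ⊗ H^{B_O'} one has (|U_B⟩⟩ ⊗ |𝟙⟩⟩^{ZZ̄}) * (|U₂⟩⟩ * |U_A⟩⟩ * |U₁⟩⟩) = |U⟩⟩ * |U_A⟩⟩ * |U_B⟩⟩, where on the left the inner link products contract H^{A_I}, H^{A_O} and the outer one contracts H^{B_I}, H^{B_O}, H^Z, H^{Z̄}, and on the right the link products contract H^{A_I}, H^{A_O}, H^{B_I}, H^{B_O}. -/
open Matrix

private lemma sum3_rot {A B C M : Type*} [Fintype A] [Fintype B] [Fintype C]
    [AddCommMonoid M] (f : A → B → C → M) :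
    (∑ a : A, ∑ b : B, ∑ c : C, f a b c) = ∑ c : C, ∑ a : A, ∑ b : B, f a b c :=
  (Finset.sum_congr rfl fun _ _ => Finset.sum_comm).trans Finset.sum_comm

private lemma sum4_rot {A B C D M : Type*} [Fintype A] [Fintype B] [Fintype C] [Fintype D]
    [AddCommMonoid M] (f : A → B → C → D → M) :
    (∑ a : A, ∑ b : B, ∑ c : C, ∑ d : D, f a b c d)
      = ∑ d : D, ∑ a : A, ∑ b : B, ∑ c : C, f a b c d :=
  (Finset.sum_congr rfl fun a _ => sum3_rot (f a)).trans Finset.sum_comm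

private lemma sum5_reorder {A B C D E M : Type*} [Fintype A] [Fintype B] [Fintype C]
    [Fintype D] [Fintype E] [AddCommMonoid M] (f : A → B → C → D → E → M) :
    (∑ a : A, ∑ b : B, ∑ c : C, ∑ d : D, ∑ e : E, f a b c d e)
      = ∑ d : D, ∑ e : E, ∑ a : A, ∑ b : B, ∑ c : C, f a b c d e :=
  (sum4_rot fun a b c d => ∑ e : E, f a b c d e).trans
    (Finset.sum_congr rfl fun d _ => sum4_rot fun a b c e => f a b c d e)

/-- let `U : H^{P_O} ⊗ H^{A_O} ⊗ H^{B_O} → H^{F_I} ⊗ H^{A_I} ⊗ H^{B_I}` be a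
unitary admitting a factorization `|U⟩⟩ = |U₁⟩⟩ * |𝟙⟩⟩^{ZZ̄} * |U₂⟩⟩` with unitaries
`U₁ : H^{A_O} ⊗ H^{P_O} → H^{B_I} ⊗ H^Z` and `U₂ : H^{B_O} ⊗ H^{Z̄} → H^{A_I} ⊗ H^{F_I}`
(`H^Z ≅ H^{Z̄}`, modelled by a common index type). Then for all unitaries
`U_A : H^{A_I} ⊗ H^{A_I'} → H^{A_O} ⊗ H^{A_O'}` and
`U_B : H^{B_I} ⊗ H^{B_I'} → H^{B_O} ⊗ H^{B_O'}` one has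
`(|U_B⟩⟩ ⊗ |𝟙⟩⟩^{ZZ̄}) * (|U₂⟩⟩ * |U_A⟩⟩ * |U₁⟩⟩) = |U⟩⟩ * |U_A⟩⟩ * |U_B⟩⟩`:
on the left, the inner link products contract `H^{A_I}, H^{A_O}` and the outer one
contracts `H^{B_I}, H^{B_O}, H^Z, H^{Z̄}`; on the right, the link products contract
`H^{A_I}, H^{A_O}, H^{B_I}, H^{B_O}`. Everything is expressed entrywise in the fixed
computational bases. -/
theorem recompose_fragments_bipartite
    {pO aO bO fI aI bI aI' aO' bI' bO' Z : Type*}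
    [Fintype pO] [Fintype aO] [Fintype bO] [Fintype fI] [Fintype aI] [Fintype bI]
    [Fintype aI'] [Fintype aO'] [Fintype bI'] [Fintype bO'] [Fintype Z]
    [DecidableEq pO] [DecidableEq aO] [DecidableEq bO] [DecidableEq fI]
    [DecidableEq aI] [DecidableEq bI] [DecidableEq aI'] [DecidableEq aO']
    [DecidableEq bI'] [DecidableEq bO'] [DecidableEq Z]
    (U : Matrix (fI × aI × bI) (pO × aO × bO) ℂ)
    (hU₁ : Uᴴ * U = 1) (hU₂ : U * Uᴴ = 1)
    (U₁ : Matrix (bI × Z) (aO × pO) ℂ)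
    (hU₁₁ : U₁ᴴ * U₁ = 1) (hU₁₂ : U₁ * U₁ᴴ = 1)
    (U₂ : Matrix (aI × fI) (bO × Z) ℂ)
    (hU₂₁ : U₂ᴴ * U₂ = 1) (hU₂₂ : U₂ * U₂ᴴ = 1)
    (hdecomp : ∀ (f : fI) (ai : aI) (bi : bI) (p : pO) (ao : aO) (bo : bO),
      U (f, ai, bi) (p, ao, bo) = ∑ z : Z, U₁ (bi, z) (ao, p) * U₂ (ai, f) (bo, z))
    (UA : Matrix (aO × aO') (aI × aI') ℂ)
    (hUA₁ : UAᴴ * UA = 1) (hUA₂ : UA * UAᴴ = 1)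
    (UB : Matrix (bO × bO') (bI × bI') ℂ)
    (hUB₁ : UBᴴ * UB = 1) (hUB₂ : UB * UBᴴ = 1) :
    ∀ (p : pO) (ai' : aI') (bi' : bI') (f : fI) (ao' : aO') (bo' : bO'),
      (∑ bi : bI, ∑ bo : bO, ∑ z : Z,
          UB (bo, bo') (bi, bi')
            * (∑ ai : aI, ∑ ao : aO,
                U₂ (ai, f) (bo, z) * UA (ao, ao') (ai, ai') * U₁ (bi, z) (ao, p)))
        = ∑ ai : aI, ∑ ao : aO, ∑ bi : bI, ∑ bo : bO,
            U (f, ai, bi) (p, ao, bo) * UA (ao, ao') (ai, ai') * UB (bo, bo') (bi, bi') := by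
  intro p ai' bi' f ao' bo'
  simp only [hdecomp, Finset.sum_mul, Finset.mul_sum]
  rw [sum5_reorder (fun bi bo z ai ao =>
    UB (bo, bo') (bi, bi') * (U₂ (ai, f) (bo, z) * UA (ao, ao') (ai, ai') * U₁ (bi, z) (ao, p)))]
  refine Finset.sum_congr rfl fun ai _ => Finset.sum_congr rfl fun ao _ =>
    Finset.sum_congr rfl fun bi _ => ?_
  exact Finset.sum_congr rfl fun bo _ => Finset.sum_congr rfl fun z _ => by ring
end

section
/- Define u₁ : {0,1}⁵ → {0,1} × {0,1}⁴ by u₁(p₁,p₂,p₃,a,b) = (p₃ ⊕ (¬a ∧ b), (p₁,p₂,a,b)) and u₂ : {0,1} × {0,1}⁴ → {0,1}² × {0,1}³ by u₂(c,(p₁,p₂,a,b)) = ((p₁ ⊕ (¬b ∧ c), p₂ ⊕ (¬c ∧ a)), (a,b,c)). Then u₁ and u₂ are bijections, and for all (p₁,p₂,p₃,a,b,c) ∈ {0,1}⁶, writing u₁(p₁,p₂,p₃,a,b) = (c_I, z) and u₂(c, z) = ((a_I, b_I), (f₁,f₂,f₃)), one has F(p₁,p₂,p₃,a,b,c) = (a_I,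 b_I, c_I, f₁, f₂, f₃). That is, the Baumeler–Wolf unitary U_BW factorizes as |U_BW⟩⟩ = |U₁⟩⟩ * |𝟙⟩⟩^{ZZ̄} * |U₂⟩⟩, where U₁ maps P_O A_O B_O to C_I Z, U₂ maps C_O Z̄ to A_I B_I F, and Z is a four-bit memory system. -/
/-- The classical function underlying the Baumeler–Wolf unitary extension `U_BW`:
`F(p₁,p₂,p₃,a,b,c) = (p₁ ⊕ (¬b ∧ c), p₂ ⊕ (¬c ∧ a), p₃ ⊕ (¬a ∧ b), a, b, c)`, whose first
three outputs are the party input bits `A_I, B_I, C_I` and whose last three are the global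
future bits `F₁, F₂, F₃`. -/
def Fbw : Bool × Bool × Bool × Bool × Bool × Bool → Bool × Bool × Bool × Bool × Bool × Bool :=
  fun x =>
    match x with
    | (p₁, p₂, p₃, a, b, c) =>
      (Bool.xor p₁ (!b && c), Bool.xor p₂ (!c && a), Bool.xor p₃ (!a && b), a, b, c)

/-- The classical function underlying `U₁ : P_O A_O B_O → C_I Z`:
`u₁(p₁,p₂,p₃,a,b) = (p₃ ⊕ (¬a ∧ b), (p₁,p₂,a,b))`. -/
def u₁ : Bool × Bool × Bool × Bool × Bool → Bool × (Bool × Bool × Bool × Bool) :=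
  fun x =>
    match x with
    | (p₁, p₂, p₃, a, b) => (Bool.xor p₃ (!a && b), (p₁, p₂, a, b))

/-- The classical function underlying `U₂ : C_O Z̄ → A_I B_I F`:
`u₂(c,(p₁,p₂,a,b)) = ((p₁ ⊕ (¬b ∧ c), p₂ ⊕ (¬c ∧ a)), (a,b,c))`. -/
def u₂ : Bool × (Bool × Bool × Bool × Bool) → (Bool × Bool) × (Bool × Bool × Bool) :=
  fun x =>
    match x with
    | (c, (p₁, p₂, a, b)) => ((Bool.xor p₁ (!b && c), Bool.xor p₂ (!c && a)), (a, b, c))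

/-- `u₁` and `u₂` are bijections, and writing `u₁(p₁,p₂,p₃,a,b) = (c_I, z)`
and `u₂(c, z) = ((a_I, b_I), (f₁,f₂,f₃))`, one has
`F(p₁,p₂,p₃,a,b,c) = (a_I, b_I, c_I, f₁, f₂, f₃)`; i.e. the Baumeler–Wolf unitary
factorizes as `|U_BW⟩⟩ = |U₁⟩⟩ * |𝟙⟩⟩^{ZZ̄} * |U₂⟩⟩` with a four-bit memory system `Z`. -/
theorem ubw_factorization :
    Function.Bijective u₁ ∧ Function.Bijective u₂ ∧
      ∀ p₁ p₂ p₃ a b c : Bool, ∀ (cI : Bool) (z : Bool × Bool × Bool × Bool)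
        (aI bI f₁ f₂ f₃ : Bool),
        u₁ (p₁, p₂, p₃, a, b) = (cI, z) →
        u₂ (c, z) = ((aI, bI), (f₁, f₂, f₃)) →
        Fbw (p₁, p₂, p₃, a, b, c) = (aI, bI, cI, f₁, f₂, f₃) := by
  refine ⟨by decide, by decide, ?_⟩
  intro p₁ p₂ p₃ a b c cI z aI bI f₁ f₂ f₃
  intro h1 h2
  simp only [u₁, Prod.mk.injEq] at h1
  obtain ⟨rfl, rfl, rfl, rfl, rfl⟩ := h1
  simp only [u₂, Prod.mk.injEq] at h2
  obtain ⟨⟨rfl, rfl⟩, rfl, rfl, rfl⟩ := h2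
  rfl
end

section
/- The deterministic tripartite correlation on bits P(o_A,o_B,o_C|i_A,i_B,i_C) = [o_A = ¬i_B ∧ i_C]·[o_B = ¬i_C ∧ i_A]·[o_C = ¬i_A ∧ i_B] is not a causal correlation: there exist no weights q_A, q_B, q_C ≥ 0 with q_A + q_B + q_C = 1, single-party conditional distributions P_X(o_X|i_X), and bipartite causal correlations P_{X,i_X,o_X} (for each X ∈ {A,B,C} and each value of i_X, o_X) such that P(o_A,o_B,o_C|i_A,i_B,i_C) = Σ_{X∈{A,B,C}} q_X P_X(o_X|i_X) P_{X,i_X,o_X}(o of the other two parties | i of the other two parties). -/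
/-- A single-party conditional probability distribution on bits: `p o i` is the
probability of outcome `o` given setting `i`. -/
def IsCond1 (p : Bool → Bool → ℝ) : Prop :=
  (∀ o i, 0 ≤ p o i) ∧ ∀ i, (∑ o : Bool, p o i) = 1

/-- A bipartite correlation `p o_Y o_Z i_Y i_Z` on bits is causal iff it decomposes as
`q·P_Y(o_Y|i_Y)·P_{Y,i_Y,o_Y}(o_Z|i_Z) + (1−q)·P_Z(o_Z|i_Z)·P_{Z,i_Z,o_Z}(o_Y|i_Y)`
for some `0 ≤ q ≤ 1` and conditional probability distributions. -/
def BipCausal (p : Bool → Bool → Bool → Bool → ℝ) : Prop :=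
  ∃ (q : ℝ) (pY pZ : Bool → Bool → ℝ)
    (pYc pZc : Bool → Bool → Bool → Bool → ℝ),
    0 ≤ q ∧ q ≤ 1 ∧ IsCond1 pY ∧ IsCond1 pZ ∧
    (∀ iY oY, IsCond1 (fun oZ iZ => pYc iY oY oZ iZ)) ∧
    (∀ iZ oZ, IsCond1 (fun oY iY => pZc iZ oZ oY iY)) ∧
    ∀ oY oZ iY iZ,
      p oY oZ iY iZ =
        q * pY oY iY * pYc iY oY oZ iZ + (1 - q) * pZ oZ iZ * pZc iZ oZ oY iY

/-- A tripartite correlation `p o_A o_B o_C i_A i_B i_C` on bits is causal iff it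
decomposes as a convex combination over which party acts first, that party's marginal
conditional distribution, and, conditioned on that party's setting and outcome, a
bipartite causal correlation for the remaining two parties. -/
def TriCausal (p : Bool → Bool → Bool → Bool → Bool → Bool → ℝ) : Prop :=
  ∃ (qA qB qC : ℝ) (pA pB pC : Bool → Bool → ℝ)
    (pAc pBc pCc : Bool → Bool → Bool → Bool → Bool → Bool → ℝ),
    0 ≤ qA ∧ 0 ≤ qB ∧ 0 ≤ qC ∧ qA + qB + qC = 1 ∧
    IsCond1 pA ∧ IsCond1 pB ∧ IsCond1 pC ∧
    (∀ iA oA, BipCausal (fun oB oC iB iC => pAc iA oA oB oC iB iC)) ∧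
    (∀ iB oB, BipCausal (fun oA oC iA iC => pBc iB oB oA oC iA iC)) ∧
    (∀ iC oC, BipCausal (fun oA oB iA iB => pCc iC oC oA oB iA iB)) ∧
    ∀ oA oB oC iA iB iC,
      p oA oB oC iA iB iC =
          qA * pA oA iA * pAc iA oA oB oC iB iC
        + qB * pB oB iB * pBc iB oB oA oC iA iC
        + qC * pC oC iC * pCc iC oC oA oB iA iB

lemma bip_nonneg {p : Bool → Bool → Bool → Bool → ℝ} (h : BipCausal p) :
    ∀ oY oZ iY iZ, 0 ≤ p oY oZ iY iZ := by
  obtain ⟨q, pY, pZ, pYc, pZc, hq0, hq1, ⟨hY0, hY1⟩, ⟨hZ0, hZ1⟩, hYc, hZc, hp⟩ := h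
  intro oY oZ iY iZ
  rw [hp]
  have h1 := mul_nonneg (mul_nonneg hq0 (hY0 oY iY)) ((hYc iY oY).1 oZ iZ)
  have h2 := mul_nonneg (mul_nonneg (by linarith : (0:ℝ) ≤ 1 - q) (hZ0 oZ iZ)) ((hZc iZ oZ).1 oY iY)
  linarith

lemma bip_sum {p : Bool → Bool → Bool → Bool → ℝ} (h : BipCausal p) :
    ∀ iY iZ, p false false iY iZ + p false true iY iZ + p true false iY iZ + p true true iY iZ = 1 := by
  obtain ⟨q, pY, pZ, pYc, pZc, hq0, hq1, ⟨hY0, hY1⟩, ⟨hZ0, hZ1⟩, hYc, hZc, hp⟩ := h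
  intro iY iZ
  have hYs := hY1 iY
  have hZs := hZ1 iZ
  have h1 := (hYc iY false).2 iZ
  have h2 := (hYc iY true).2 iZ
  have h3 := (hZc iZ false).2 iY
  have h4 := (hZc iZ true).2 iY
  simp only [Fintype.sum_bool] at hYs hZs h1 h2 h3 h4
  rw [hp, hp, hp, hp]
  linear_combination q * pY false iY * h1 + q * pY true iY * h2 +
    (1 - q) * pZ false iZ * h3 + (1 - q) * pZ true iZ * h4 + q * hYs + (1 - q) * hZs

lemma key_zero (q r : ℝ) (f rest : Bool → Bool → ℝ)
    (hq : 0 ≤ q) (hr : 0 ≤ r)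
    (hsum : f false false + f false true + f true false + f true true = 1)
    (hrest : ∀ a b, 0 ≤ rest a b)
    (heq : ∀ a b, (0:ℝ) = q * r * f a b + rest a b) :
    q * r = 0 := by
  have h1 := heq false false
  have h2 := heq false true
  have h3 := heq true false
  have h4 := heq true true
  have r1 := hrest false false
  have r2 := hrest false true
  have r3 := hrest true false
  have r4 := hrest true true
  nlinarith [mul_nonneg hq hr, hsum, h1, h2, h3, h4]

/-- the deterministic tripartite correlation
`P(o_A,o_B,o_C|i_A,i_B,i_C) = [o_A = ¬i_B ∧ i_C]·[o_B = ¬i_C ∧ i_A]·[o_C = ¬i_A ∧ i_B]`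
is not a causal correlation. -/
theorem araujoFeix_correlation_not_causal :
    ¬ TriCausal (fun oA oB oC iA iB iC =>
        if oA = (!iB && iC) ∧ oB = (!iC && iA) ∧ oC = (!iA && iB) then 1 else 0) := by
  rintro ⟨qA, qB, qC, pA, pB, pC, pAc, pBc, pCc, hqA, hqB, hqC, hq1,
    ⟨hA0, hA1⟩, ⟨hB0, hB1⟩, ⟨hC0, hC1⟩, hAc, hBc, hCc, hdec⟩
  -- If party X may act first (q_X > 0), its output must not depend on others' inputs
  have zA : ∀ oA iA iB iC, oA ≠ (!iB && iC) → qA * pA oA iA = 0 := by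
    intro oA iA iB iC hne
    refine key_zero qA (pA oA iA) (fun a b => pAc iA oA a b iB iC)
      (fun a b => qB * pB a iB * pBc iB a oA b iA iC + qC * pC b iC * pCc iC b oA a iA iB)
      hqA (hA0 oA iA) (bip_sum (hAc iA oA) iB iC) ?_ ?_
    · intro a b
      have h1 := mul_nonneg (mul_nonneg hqB (hB0 a iB)) (bip_nonneg (hBc iB a) oA b iA iC)
      have h2 := mul_nonneg (mul_nonneg hqC (hC0 b iC)) (bip_nonneg (hCc iC b) oA a iA iB)
      simpa using add_nonneg h1 h2
    · intro a b
      have h := hdec oA a b iA iB iC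
      simp only at h ⊢
      rw [if_neg (fun hcon => hne hcon.1)] at h
      linarith [h]
  have zB : ∀ oB iB iA iC, oB ≠ (!iC && iA) → qB * pB oB iB = 0 := by
    intro oB iB iA iC hne
    refine key_zero qB (pB oB iB) (fun a b => pBc iB oB a b iA iC)
      (fun a b => qA * pA a iA * pAc iA a oB b iB iC + qC * pC b iC * pCc iC b a oB iA iB)
      hqB (hB0 oB iB) (bip_sum (hBc iB oB) iA iC) ?_ ?_
    · intro a b
      have h1 := mul_nonneg (mul_nonneg hqA (hA0 a iA)) (bip_nonneg (hAc iA a) oB b iB iC)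
      have h2 := mul_nonneg (mul_nonneg hqC (hC0 b iC)) (bip_nonneg (hCc iC b) a oB iA iB)
      simpa using add_nonneg h1 h2
    · intro a b
      have h := hdec a oB b iA iB iC
      simp only at h ⊢
      rw [if_neg (fun hcon => hne hcon.2.1)] at h
      linarith [h]
  have zC : ∀ oC iC iA iB, oC ≠ (!iA && iB) → qC * pC oC iC = 0 := by
    intro oC iC iA iB hne
    refine key_zero qC (pC oC iC) (fun a b => pCc iC oC a b iA iB)
      (fun a b => qA * pA a iA * pAc iA a b oC iB iC + qB * pB b iB * pBc iB b a oC iA iC)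
      hqC (hC0 oC iC) (bip_sum (hCc iC oC) iA iB) ?_ ?_
    · intro a b
      have h1 := mul_nonneg (mul_nonneg hqA (hA0 a iA)) (bip_nonneg (hAc iA a) b oC iB iC)
      have h2 := mul_nonneg (mul_nonneg hqB (hB0 b iB)) (bip_nonneg (hBc iB b) a oC iA iC)
      simpa using add_nonneg h1 h2
    · intro a b
      have h := hdec a b oC iA iB iC
      simp only at h ⊢
      rw [if_neg (fun hcon => hne hcon.2.2)] at h
      linarith [h]
  -- deduce each weight is zero
  have eA1 : qA * pA false false = 0 := zA false false false true (by simp)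
  have eA2 : qA * pA true false = 0 := zA true false false false (by simp)
  have hAs := hA1 false
  simp only [Fintype.sum_bool] at hAs
  have hqA0 : qA = 0 := by nlinarith [eA1, eA2, hAs]
  have eB1 : qB * pB false false = 0 := zB false false true false (by simp)
  have eB2 : qB * pB true false = 0 := zB true false false false (by simp)
  have hBs := hB1 false
  simp only [Fintype.sum_bool] at hBs
  have hqB0 : qB = 0 := by nlinarith [eB1, eB2, hBs]
  have eC1 : qC * pC false false = 0 := zC false false false true (by simp)
  have eC2 : qC * pC true false = 0 := zC true false false false (by simp)
  have hCs := hC1 false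
  simp only [Fintype.sum_bool] at hCs
  have hqC0 : qC = 0 := by nlinarith [eC1, eC2, hCs]
  rw [hqA0, hqB0, hqC0] at hq1
  norm_num at hq1
end

section
/- Suppose the family of distributions P(o, κ | i) over outcome assignments o and strict partial orders κ on Γ satisfies the free choice and closed laboratories assumptions. Then for every setting assignment i, every outcome assignment o, and every strict partial order κ on Γ with P(o, κ | i) > 0, the coarse-grained relation 𝒞_κ is a strict partial order on the set of parties Δ. -/
open Finset

/-- The variables associated to the parties: for a party `X`, `(X,0)` is `X_I`, `(X,1)` is
`X_O`, `(X,2)` is the setting variable `I_X` and `(X,3)` is the outcome variable `O_X`. -/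
abbrev PVar (Δ : Type) := Δ × Fin 4

def XIv {Δ : Type} (X : Δ) : PVar Δ := (X, 0)
def XOv {Δ : Type} (X : Δ) : PVar Δ := (X, 1)
def IVv {Δ : Type} (X : Δ) : PVar Δ := (X, 2)
def OVv {Δ : Type} (X : Δ) : PVar Δ := (X, 3)

/-- Relations on the set `Γ` of variables, given as `Bool`-valued functions so that the
collection of all of them forms a finite type over which probabilities can be summed. -/
abbrev CRel (Δ : Type) := PVar Δ → PVar Δ → Bool

/-- `κ` is a strict partial order (irreflexive and transitive). -/
def IsSPO {Δ : Type} (κ : CRel Δ) : Prop :=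
  (∀ a, κ a a = false) ∧ ∀ a b c, κ a b = true → κ b c = true → κ a c = true

/-- `r` is a strict partial order on the subset `S`. -/
def IsSPOOn {Δ : Type} (r : CRel Δ) (S : Finset (PVar Δ)) : Prop :=
  (∀ a ∈ S, r a a = false) ∧
  ∀ a ∈ S, ∀ b ∈ S, ∀ c ∈ S, r a b = true → r b c = true → r a c = true

/-- The causal past `𝒫_v` of a variable `v` w.r.t. `κ`. -/
def pastSet {Δ : Type} [Fintype Δ] [DecidableEq Δ] (κ : CRel Δ) (v : PVar Δ) :
    Finset (PVar Δ) :=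
  Finset.univ.filter (fun Y => κ Y v = true)

/-- The causal elsewhere `ℰ_v` of a variable `v` w.r.t. `κ`. -/
def elseSet {Δ : Type} [Fintype Δ] [DecidableEq Δ] (κ : CRel Δ) (v : PVar Δ) :
    Finset (PVar Δ) :=
  Finset.univ.filter (fun Y => Y ≠ v ∧ κ Y v = false ∧ κ v Y = false)

/-- The marginal probability entering the free choice assumption for party `X`: the
probability that the causal past of `I_X` is `𝒴`, its causal elsewhere is `𝒵`, the causal
order restricted to `𝒴 ∪ 𝒵` is `κ₀`, and the outcome variables lying in `𝒴 ∪ 𝒵` take the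
values specified by `o` (all other outcome variables being marginalised). -/
noncomputable def margFC {Δ : Type} [Fintype Δ] [DecidableEq Δ]
    {ISet OSet : Δ → Type} [∀ X, Fintype (OSet X)] [∀ X, DecidableEq (OSet X)]
    (P : (∀ X, ISet X) → (∀ X, OSet X) → CRel Δ → ℝ)
    (i : ∀ X, ISet X) (X : Δ) (𝒴 𝒵 : Finset (PVar Δ)) (κ₀ : CRel Δ)
    (o : ∀ X', OSet X') : ℝ :=
  ∑ o' ∈ Finset.univ.filter
      (fun o' : ∀ X', OSet X' => ∀ X', OVv X' ∈ 𝒴 ∪ 𝒵 → o' X' = o X'),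
    ∑ κ ∈ Finset.univ.filter (fun κ : CRel Δ =>
        pastSet κ (IVv X) = 𝒴 ∧ elseSet κ (IVv X) = 𝒵 ∧
        ∀ a ∈ 𝒴 ∪ 𝒵, ∀ b ∈ 𝒴 ∪ 𝒵, κ a b = κ₀ a b),
      P i o' κ

/-- Free choice: for every party `X`, all disjoint subsets `𝒴, 𝒵 ⊆ Γ \ {I_X}`, every SPO
`κ₀` on `𝒴 ∪ 𝒵` and all outcome values of the parties whose outcome variable lies in
`𝒴 ∪ 𝒵`, the marginal probability `margFC` does not depend on the value of `i_X`. -/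
def FreeChoice {Δ : Type} [Fintype Δ] [DecidableEq Δ]
    {ISet OSet : Δ → Type} [∀ X, Fintype (OSet X)] [∀ X, DecidableEq (OSet X)]
    (P : (∀ X, ISet X) → (∀ X, OSet X) → CRel Δ → ℝ) : Prop :=
  ∀ (X : Δ) (𝒴 𝒵 : Finset (PVar Δ)),
    IVv X ∉ 𝒴 → IVv X ∉ 𝒵 → Disjoint 𝒴 𝒵 →
    ∀ κ₀ : CRel Δ, IsSPOOn κ₀ (𝒴 ∪ 𝒵) →
    ∀ (o : ∀ X', OSet X') (i i' : ∀ X', ISet X'),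
      (∀ X', X' ≠ X → i X' = i' X') →
      margFC P i X 𝒴 𝒵 κ₀ o = margFC P i' X 𝒴 𝒵 κ₀ o

/-- The closed-laboratory structural conditions on the causal order. -/
def ClosedLabStruct {Δ : Type} (κ : CRel Δ) : Prop :=
  ∀ (X : Δ) (Y : PVar Δ),
    (κ (IVv X) Y = true ↔ (Y = OVv X ∨ Y = XOv X ∨ κ (XOv X) Y = true)) ∧
    (κ Y (OVv X) = true ↔ (Y = IVv X ∨ Y = XIv X ∨ κ Y (XIv X) = true))

/-- Closed laboratories: positive-probability causal orders satisfy the structural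
conditions, and for each party `X` there is a setting value `i_X*` for which
`X_I ≺ X_O` holds with certainty. -/
def ClosedLab {Δ : Type} {ISet OSet : Δ → Type}
    (P : (∀ X, ISet X) → (∀ X, OSet X) → CRel Δ → ℝ) : Prop :=
  (∀ i o κ, 0 < P i o κ → ClosedLabStruct κ) ∧
  ∀ X : Δ, ∃ istar : ISet X,
    ∀ i o κ, i X = istar → 0 < P i o κ → κ (XIv X) (XOv X) = true

/-- The coarse-grained relation `𝒞_κ` on the parties: `X 𝒞_κ Y` iff there is a chain
`X_O ≺ Λ^{(1)}_I`, `Λ^{(j)}_O ≺ Λ^{(j+1)}_I`, …, `Λ^{(M)}_O ≺ Y_I` (with `M ≥ 0`). -/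
def coarse {Δ : Type} (κ : CRel Δ) : Δ → Δ → Prop :=
  Relation.TransGen (fun W V => κ (XOv W) (XIv V) = true)

/-!
Fix a positive-probability causal order `κ` and a party `X` whose laboratory lies on a
coarse-grained cycle. Free choice lets us switch `i_X` to `i_X*` while keeping, with positive
probability, the causal past and elsewhere of `I_X` and the order on them; the future of `I_X`
is then unchanged too. Closed laboratories say that `X_O ≺ Y_I` holds iff `I_X ≺ Y_I`, so every
step of the cycle that does not end in the future of `I_X` survives the switch. On a cycle of
minimal length only the step leaving `X` ends there, and since `X_I ≺ X_O` after the switch,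
`X` can be bypassed: the switched order carries a shorter cycle.
-/

namespace Relation

variable {α : Type*} {R R' : α → α → Prop}

structure IsClosedWalk (R : α → α → Prop) (n : ℕ) (W : ℕ → α) : Prop where
  pos : 0 < n
  closed : W n = W 0
  step : ∀ j < n, R (W j) (W (j + 1))

/-- `R'` is `R` with `x` made a transit vertex: steps leaving `x` and steps not ending in an
`R`-successor of `x` are kept, and `R'`-steps into and out of `x` compose. -/
structure IsSwitchAt (R R' : α → α → Prop) (x : α) : Prop where
  irrefl : ¬R' x x
  trans : ∀ a b, R' a x → R' x b → R' a b
  out : ∀ b, R x b → R' x b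
  keep : ∀ a b, R a b → ¬R x b → R' a b

theorem IsSwitchAt.not_rel_self {x : α} (hs : IsSwitchAt R R' x) : ¬R x x :=
  fun h => hs.irrefl (hs.out x h)

theorem ReflTransGen.exists_walk {a b : α} (h : ReflTransGen R a b) :
    ∃ n, ∃ W : ℕ → α, W 0 = a ∧ W n = b ∧ ∀ j < n, R (W j) (W (j + 1)) := by
  induction h using ReflTransGen.head_induction_on with
  | refl => exact ⟨0, fun _ => b, rfl, rfl, by simp⟩
  | @head a c hac _ ih =>
    obtain ⟨n, W, rfl, hWn, hW⟩ := ih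
    refine ⟨n + 1, fun | 0 => a | j + 1 => W j, rfl, hWn, ?_⟩
    rintro (_ | j) hj
    exacts [hac, hW j (by omega)]

theorem TransGen.exists_isClosedWalk {a : α} (h : TransGen R a a) :
    ∃ n W, IsClosedWalk R n W := by
  obtain ⟨c, hac, hca⟩ := TransGen.head'_iff.mp h
  obtain ⟨n, W, rfl, hWn, hW⟩ := hca.exists_walk
  refine ⟨n + 1, fun | 0 => a | j + 1 => W j, ⟨n.succ_pos, hWn, ?_⟩⟩
  rintro (_ | j) hj
  exacts [hac, hW j (by omega)]

namespace IsClosedWalk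

variable {n k : ℕ} {W : ℕ → α}

theorem shortcut (hW : IsClosedWalk R n W) (hkn : k ≤ n) (hR : R (W 0) (W k)) :
    IsClosedWalk R (n - k + 1) (fun | 0 => W 0 | j + 1 => W (j + k)) := by
  refine ⟨by omega, by simpa [Nat.sub_add_cancel hkn] using hW.closed, ?_⟩
  rintro (_ | j) hj
  · simpa using hR
  · simpa [Nat.add_right_comm j 1 k] using hW.step (j + k) (by omega)

theorem bypass (hW : IsClosedWalk R n W) (hs : IsSwitchAt R R' (W 0))
    (hchord : ∀ k, 2 ≤ k → k ≤ n → ¬R (W 0) (W k)) (hn : 2 ≤ n) :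
    IsClosedWalk R' (n - 1) (fun j => if j = n - 1 then W 1 else W (j + 1)) := by
  have hkeep : ∀ j, 1 ≤ j → j < n → R' (W j) (W (j + 1)) := fun j hj hjn =>
    hs.keep _ _ (hW.step j hjn) (hchord (j + 1) (by omega) hjn)
  refine ⟨by omega, by simp, fun j hj => ?_⟩
  by_cases hjn : j + 1 = n - 1
  · have hlast := hkeep (n - 1) (by omega) (by omega)
    rw [Nat.sub_add_cancel (by omega : 1 ≤ n), hW.closed] at hlast
    simpa [hjn, show j ≠ n - 1 by omega] using hs.trans _ _ hlast (hs.out _ (hW.step 0 hW.pos))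
  · simpa [hjn, show j ≠ n - 1 by omega] using hkeep (j + 1) (by omega) (by omega)

end IsClosedWalk

theorem not_isClosedWalk_of_isSwitchAt (good : (α → α → Prop) → Prop)
    (hswitch : ∀ R, good R → ∀ x, ∃ R', good R' ∧ IsSwitchAt R R' x) :
    ∀ n R W, good R → ¬IsClosedWalk R n W := by
  intro n
  induction n using Nat.strong_induction_on with
  | _ n ih =>
  intro R W hR hW
  obtain ⟨R', hR', hs⟩ := hswitch R hR (W 0)
  by_cases hchord : ∃ k, 2 ≤ k ∧ k ≤ n ∧ R (W 0) (W k)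
  · obtain ⟨k, hk, hkn, hRk⟩ := hchord
    exact ih _ (by omega) R _ hR (hW.shortcut hkn hRk)
  push Not at hchord
  rcases (show n = 1 ∨ 2 ≤ n by have := hW.pos; omega) with rfl | hn
  · have h01 := hW.step 0 one_pos
    rw [zero_add, hW.closed] at h01
    exact hs.not_rel_self h01
  · exact ih (n - 1) (by omega) R' _ hR' (hW.bypass hs hchord hn)

theorem not_transGen_self_of_isSwitchAt (good : (α → α → Prop) → Prop)
    (hswitch : ∀ R, good R → ∀ x, ∃ R', good R' ∧ IsSwitchAt R R' x) (hR : good R) (a : α) :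
    ¬TransGen R a a := fun h =>
  let ⟨n, W, hW⟩ := h.exists_isClosedWalk
  not_isClosedWalk_of_isSwitchAt good hswitch n R W hR hW

end Relation

open Relation

def coarseStep {Δ : Type} (κ : CRel Δ) (X Y : Δ) : Prop := κ (XOv X) (XIv Y) = true

section CausalOrder

variable {Δ : Type} {κ κ' : CRel Δ}

theorem IsSPO.isSPOOn (hκ : IsSPO κ) (S : Finset (PVar Δ)) : IsSPOOn κ S :=
  ⟨fun a _ => hκ.1 a, fun a _ b _ c _ => hκ.2 a b c⟩

theorem ClosedLabStruct.coarseStep_iff (h : ClosedLabStruct κ) {X Y : Δ} :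
    coarseStep κ X Y ↔ κ (IVv X) (XIv Y) = true := by
  rw [(h X (XIv Y)).1]
  simp [coarseStep, XIv, OVv, XOv]

variable [Fintype Δ] [DecidableEq Δ]

theorem disjoint_pastSet_elseSet (κ : CRel Δ) (v : PVar Δ) :
    Disjoint (pastSet κ v) (elseSet κ v) := by
  simp +contextual [Finset.disjoint_left, pastSet, elseSet]

theorem IsSPO.mem_pastSet_union_elseSet (hκ : IsSPO κ) {v Y : PVar Δ} :
    Y ∈ pastSet κ v ∪ elseSet κ v ↔ Y ≠ v ∧ κ v Y = false := by
  simp only [Finset.mem_union, pastSet, elseSet, Finset.mem_filter, Finset.mem_univ, true_and]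
  constructor
  · rintro (h | ⟨hne, -, h⟩)
    · refine ⟨fun e => by simp [e, hκ.1] at h, Bool.eq_false_iff.mpr fun h' => ?_⟩
      simpa [hκ.1] using hκ.2 _ _ _ h h'
    · exact ⟨hne, h⟩
  · rintro ⟨hne, h⟩
    cases hY : κ Y v <;> simp_all

theorem IsSPO.apply_eq_of_pastSet_eq_of_elseSet_eq (hκ : IsSPO κ) (hκ' : IsSPO κ')
    {v : PVar Δ} (hp : pastSet κ' v = pastSet κ v) (he : elseSet κ' v = elseSet κ v) :
    κ' v = κ v := by
  funext Y
  have hU := hκ'.mem_pastSet_union_elseSet (v := v) (Y := Y)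
  rw [hp, he, hκ.mem_pastSet_union_elseSet] at hU
  by_cases hY : Y = v
  · simp [hY, hκ.1, hκ'.1]
  · cases h : κ v Y <;> cases h' : κ' v Y <;> simp_all

theorem isSwitchAt_coarseStep (hκ : IsSPO κ) (hκ' : IsSPO κ') (hcl : ClosedLabStruct κ)
    (hcl' : ClosedLabStruct κ') {X : Δ}
    (hp : pastSet κ' (IVv X) = pastSet κ (IVv X)) (he : elseSet κ' (IVv X) = elseSet κ (IVv X))
    (hagree : ∀ a ∈ pastSet κ (IVv X) ∪ elseSet κ (IVv X),
      ∀ b ∈ pastSet κ (IVv X) ∪ elseSet κ (IVv X), κ' a b = κ a b)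
    (hX : κ' (XIv X) (XOv X) = true) :
    IsSwitchAt (coarseStep κ) (coarseStep κ') X where
  irrefl h := by simpa [hκ'.1] using hκ'.2 _ _ _ h hX
  trans _ _ hax hxb := hκ'.2 _ _ _ (hκ'.2 _ _ _ hax hX) hxb
  out _ h := by
    rw [hcl'.coarseStep_iff, hκ.apply_eq_of_pastSet_eq_of_elseSet_eq hκ' hp he]
    exact hcl.coarseStep_iff.mp h
  keep a b hab hxb := by
    have hb : κ (IVv X) (XIv b) = false := by simpa [hcl.coarseStep_iff] using hxb
    have ha : κ (IVv X) (XOv a) = false :=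
      Bool.eq_false_iff.mpr fun h => by simp [hκ.2 _ _ _ h hab] at hb
    have hU : ∀ Y, Y ≠ IVv X → κ (IVv X) Y = false → Y ∈ pastSet κ (IVv X) ∪ elseSet κ (IVv X) :=
      fun Y hne hY => hκ.mem_pastSet_union_elseSet.mpr ⟨hne, hY⟩
    exact (hagree _ (hU _ (by simp [XOv, IVv]) ha) _ (hU _ (by simp [XIv, IVv]) hb)).trans hab

end CausalOrder

section Switching

variable {Δ : Type} [Fintype Δ] [DecidableEq Δ] {ISet OSet : Δ → Type}
  [∀ X, Fintype (OSet X)] [∀ X, DecidableEq (OSet X)]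
  {P : (∀ X, ISet X) → (∀ X, OSet X) → CRel Δ → ℝ}

theorem margFC_pos_iff (hPos : ∀ i o κ, 0 ≤ P i o κ) {i : ∀ X, ISet X} {X : Δ}
    {𝒴 𝒵 : Finset (PVar Δ)} {κ₀ : CRel Δ} {o : ∀ X, OSet X} :
    0 < margFC P i X 𝒴 𝒵 κ₀ o ↔ ∃ o' κ, (∀ X', OVv X' ∈ 𝒴 ∪ 𝒵 → o' X' = o X') ∧
      (pastSet κ (IVv X) = 𝒴 ∧ elseSet κ (IVv X) = 𝒵 ∧
        ∀ a ∈ 𝒴 ∪ 𝒵, ∀ b ∈ 𝒴 ∪ 𝒵, κ a b = κ₀ a b) ∧ 0 < P i o' κ := by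
  unfold margFC
  simp only [Finset.sum_pos_iff_of_nonneg (fun _ _ => Finset.sum_nonneg fun _ _ => hPos _ _ _),
    Finset.sum_pos_iff_of_nonneg (fun _ _ => hPos _ _ _), Finset.mem_filter, Finset.mem_univ,
    true_and, exists_and_left]

theorem exists_switched (hPos : ∀ i o κ, 0 ≤ P i o κ) (hFC : FreeChoice P) (hCL : ClosedLab P)
    {i : ∀ X, ISet X} {o : ∀ X, OSet X} {κ : CRel Δ} (hκ : IsSPO κ) (h : 0 < P i o κ) (X : Δ) :
    ∃ i' o' κ', 0 < P i' o' κ' ∧ κ' (XIv X) (XOv X) = true ∧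
      pastSet κ' (IVv X) = pastSet κ (IVv X) ∧ elseSet κ' (IVv X) = elseSet κ (IVv X) ∧
      ∀ a ∈ pastSet κ (IVv X) ∪ elseSet κ (IVv X),
        ∀ b ∈ pastSet κ (IVv X) ∪ elseSet κ (IVv X), κ' a b = κ a b := by
  obtain ⟨istar, hstar⟩ := hCL.2 X
  have hpos : 0 < margFC P i X (pastSet κ (IVv X)) (elseSet κ (IVv X)) κ o :=
    (margFC_pos_iff hPos).mpr ⟨o, κ, fun _ _ => rfl, ⟨rfl, rfl, fun _ _ _ _ => rfl⟩, h⟩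
  rw [hFC X _ _ (by simp [pastSet, hκ.1]) (by simp [elseSet]) (disjoint_pastSet_elseSet κ _) κ
    (hκ.isSPOOn _) o i (Function.update i X istar)
    (fun Y hY => (Function.update_of_ne hY _ _).symm)] at hpos
  obtain ⟨o', κ', -, ⟨hp, he, hagree⟩, hpos'⟩ := (margFC_pos_iff hPos).mp hpos
  exact ⟨_, o', κ', hpos', hstar _ _ _ (Function.update_self ..) hpos', hp, he, hagree⟩

end Switching

theorem coarse_relation_is_SPO_general
    {Δ : Type} [Fintype Δ] [DecidableEq Δ]
    {ISet OSet : Δ → Type}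
    [∀ X, Fintype (OSet X)] [∀ X, DecidableEq (OSet X)]
    (P : (∀ X, ISet X) → (∀ X, OSet X) → CRel Δ → ℝ)
    (hPos : ∀ i o κ, 0 ≤ P i o κ)
    (hSupp : ∀ i o κ, P i o κ ≠ 0 → IsSPO κ)
    (hFC : FreeChoice P)
    (hCL : ClosedLab P) :
    ∀ i o κ, 0 < P i o κ →
      (∀ X : Δ, ¬ coarse κ X X) ∧
      (∀ X Y Z : Δ, coarse κ X Y → coarse κ Y Z → coarse κ X Z) := by
  have hswitch : ∀ R, (∃ i o κ, 0 < P i o κ ∧ R = coarseStep κ) → ∀ X,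
      ∃ R', (∃ i o κ, 0 < P i o κ ∧ R' = coarseStep κ) ∧ IsSwitchAt R R' X := by
    rintro _ ⟨i, o, κ, h, rfl⟩ X
    have hκ := hSupp i o κ h.ne'
    obtain ⟨i', o', κ', h', hX, hp, he, hagree⟩ := exists_switched hPos hFC hCL hκ h X
    exact ⟨_, ⟨i', o', κ', h', rfl⟩, isSwitchAt_coarseStep hκ (hSupp _ _ _ h'.ne')
      (hCL.1 _ _ _ h) (hCL.1 _ _ _ h') hp he hagree hX⟩
  intro i o κ h
  exact ⟨not_transGen_self_of_isSwitchAt _ hswitch ⟨i, o, κ, h, rfl⟩,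
    fun _ _ _ => TransGen.trans⟩

/-- if the family of distributions `P(o, κ | i)` satisfies the free choice
and closed laboratories assumptions, then for every setting assignment `i`, outcome
assignment `o` and SPO `κ` with `P(o, κ | i) > 0`, the coarse-grained relation `𝒞_κ` is a
strict partial order on the set of parties `Δ`. -/
theorem coarse_relation_is_SPO
    {Δ : Type} [Fintype Δ] [DecidableEq Δ]
    {ISet OSet : Δ → Type}
    [∀ X, Fintype (ISet X)] [∀ X, DecidableEq (ISet X)] [∀ X, Nonempty (ISet X)]
    [∀ X, Fintype (OSet X)] [∀ X, DecidableEq (OSet X)]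
    (P : (∀ X, ISet X) → (∀ X, OSet X) → CRel Δ → ℝ)
    (hPos : ∀ i o κ, 0 ≤ P i o κ)
    (hNorm : ∀ i, (∑ o : ∀ X, OSet X, ∑ κ : CRel Δ, P i o κ) = 1)
    (hSupp : ∀ i o κ, P i o κ ≠ 0 → IsSPO κ)
    (hFC : FreeChoice P)
    (hCL : ClosedLab P) :
    ∀ i o κ, 0 < P i o κ →
      (∀ X : Δ, ¬ coarse κ X X) ∧
      (∀ X Y Z : Δ, coarse κ X Y → coarse κ Y Z → coarse κ X Z) :=
  coarse_relation_is_SPO_general P hPos hSupp hFC hCL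
end

section
/- Suppose the family of distributions P(o, κ | i) over outcome assignments o and strict partial orders κ on Γ satisfies the free choice and closed laboratories assumptions. Define, for each SPO ξ on the set of parties Δ, P(o, ξ | i) := Σ_{κ : 𝒞_κ = ξ} P(o, κ | i). Then the marginal correlation P(o | i) := Σ_κ P(o, κ | i) is a causal correlation, witnessed by the distribution P(o, ξ | i): that is, Σ_ξ P(o, ξ | i) = P(o | i), and for every party X, every subset 𝒳 ⊆ Δ \ {X}, and every SPO ξ₀ on {X} ∪ 𝒳, the probability obtained by summing P(o, ξ | i) over all ξ in which no element of 𝒳 lies in the causal future of X and whose restriction to {X} ∪ 𝒳 equals ξ₀, and marginalising the outcomes of all parties outside 𝒳, does not depend on the value of i_X. -/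
open Finset

open scoped Classical

/-- The probability, computed from the coarse-grained distribution
`P(o, ξ | i) = Σ_{κ : 𝒞_κ = ξ} P(o, κ | i)`, that no element of `𝒳` lies in the causal
future of the party `X`, that the coarse-grained causal order restricted to `{X} ∪ 𝒳`
equals `ξ₀`, and that the parties in `𝒳` display the outcomes specified by `o` (all
other outcomes being marginalised). -/
noncomputable def margCausal {Δ : Type} [Fintype Δ] [DecidableEq Δ]
    {ISet OSet : Δ → Type} [∀ X, Fintype (OSet X)] [∀ X, DecidableEq (OSet X)]
    (P : (∀ X, ISet X) → (∀ X, OSet X) → CRel Δ → ℝ)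
    (i : ∀ X, ISet X) (o : ∀ X, OSet X) (X : Δ) (𝒳 : Finset Δ)
    (ξ₀ : Δ → Δ → Bool) : ℝ :=
  ∑ o' ∈ Finset.univ.filter (fun o' : ∀ X', OSet X' => ∀ W ∈ 𝒳, o' W = o W),
    ∑ ξ ∈ Finset.univ.filter (fun ξ : Δ → Δ → Bool =>
        (∀ W ∈ 𝒳, ξ X W = false) ∧
        ∀ a ∈ insert X 𝒳, ∀ b ∈ insert X 𝒳, ξ a b = ξ₀ a b),
      ∑ κ ∈ Finset.univ.filter
          (fun κ : CRel Δ => ∀ Y Z : Δ, (coarse κ Y Z ↔ ξ Y Z = true)),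
        P i o' κ

/-!
Part (a) holds because every causal order `κ` has exactly one coarse-grained order `𝒞_κ`.

For part (b), group the causal orders by the data the free-choice marginal of `X` conditions on:
the causal past and elsewhere of `I_X` and `κ` restricted to them. Under closed laboratories
`I_X ≺ W_I` iff `X_O ≺ W_I`, so the coarse-grained successors of `X` are read off the future
of `I_X`, and a coarse-grained chain ending at a party that `X` does not reach runs entirely
outside that future, where `κ` is fixed by its group. Hence the event measured by `margCausal`
depends only on the group, and on it the outcome variables of `𝒳` lie outside the future of
`I_X`. So `margCausal` is a sum of free-choice marginals, each independent of `i_X`.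
-/

open Relation

section AgreeOffSucc

variable {α : Type*}

def AgreeOffSucc (r r' : α → α → Prop) (x : α) : Prop :=
  (∀ v, r x v ↔ r' x v) ∧ ∀ w v, ¬ r x v → (r w v ↔ r' w v)

variable {r r' : α → α → Prop} {x : α}

theorem AgreeOffSucc.symm (h : AgreeOffSucc r r' x) : AgreeOffSucc r' r x :=
  ⟨fun v => (h.1 v).symm, fun w v hv => (h.2 w v (mt (h.1 v).1 hv)).symm⟩

theorem AgreeOffSucc.transGen_of_transGen_from (h : AgreeOffSucc r r' x) {b : α}
    (hxb : TransGen r x b) : TransGen r' x b := by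
  induction hxb with
  | single hxb => exact .single ((h.1 _).1 hxb)
  | @tail c b _ hcb ih =>
    by_cases hxb : r x b
    · exact .single ((h.1 b).1 hxb)
    · exact ih.tail ((h.2 c b hxb).1 hcb)

theorem AgreeOffSucc.transGen_from_iff (h : AgreeOffSucc r r' x) {b : α} :
    TransGen r x b ↔ TransGen r' x b :=
  ⟨h.transGen_of_transGen_from, h.symm.transGen_of_transGen_from⟩

theorem AgreeOffSucc.transGen_of_transGen (h : AgreeOffSucc r r' x) {a b : α}
    (hxb : ¬ TransGen r x b) (hab : TransGen r a b) : TransGen r' a b := by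
  induction hab with
  | single hab => exact .single ((h.2 _ _ fun h' => hxb (.single h')).1 hab)
  | @tail c b _ hcb ih =>
    exact (ih fun hxc => hxb (hxc.tail hcb)).tail ((h.2 c b fun h' => hxb (.single h')).1 hcb)

theorem AgreeOffSucc.transGen_iff (h : AgreeOffSucc r r' x) {a b : α}
    (hxb : ¬ TransGen r x b) : TransGen r a b ↔ TransGen r' a b :=
  ⟨h.transGen_of_transGen hxb, h.symm.transGen_of_transGen (mt h.transGen_from_iff.2 hxb)⟩

end AgreeOffSucc

theorem Finset.sum_eq_sum_of_forall_sum_fiber_eq {α β M : Type*} [AddCommMonoid M]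
    [DecidableEq β] {s : Finset α} (r : α → β) {g h : α → M}
    (H : ∀ a ∈ s, ∑ x ∈ s with r x = r a, g x = ∑ x ∈ s with r x = r a, h x) :
    ∑ x ∈ s, g x = ∑ x ∈ s, h x := by
  rw [← sum_fiberwise_of_maps_to (fun x hx => mem_image_of_mem r hx) g,
    ← sum_fiberwise_of_maps_to (fun x hx => mem_image_of_mem r hx) h]
  refine sum_congr rfl fun y hy => ?_
  obtain ⟨a, ha, rfl⟩ := mem_image.1 hy
  exact H a ha

section ClosedLab

variable {Δ : Type} {κ : CRel Δ}

def IsClosedLabSPO (κ : CRel Δ) : Prop := IsSPO κ ∧ ClosedLabStruct κ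

theorem IsClosedLabSPO.setting_lt_input_iff (hκ : IsClosedLabSPO κ) (X W : Δ) :
    κ (IVv X) (XIv W) = true ↔ κ (XOv X) (XIv W) = true := by
  rw [(hκ.2 X (XIv W)).1]
  simp [XIv, XOv, OVv]

theorem IsClosedLabSPO.coarse_of_setting_lt_outcome (hκ : IsClosedLabSPO κ) {X W : Δ}
    (hWX : W ≠ X) (h : κ (IVv X) (OVv W) = true) : coarse κ X W := by
  rw [(hκ.2 X (OVv W)).1, (hκ.2 W (XOv X)).2] at h
  simp [OVv, XOv, IVv, XIv, hWX] at h
  exact .single h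

end ClosedLab

section Cells

variable {Δ : Type} [DecidableEq Δ] {κ κ' : CRel Δ} {X : Δ}

def restrictTo (S : Finset (PVar Δ)) (κ : CRel Δ) : CRel Δ :=
  fun a b => if a ∈ S ∧ b ∈ S then κ a b else false

theorem IsSPO.isSPOOn_restrictTo (hκ : IsSPO κ) (S : Finset (PVar Δ)) :
    IsSPOOn (restrictTo S κ) S := by
  refine ⟨fun a ha => by simp [restrictTo, ha, hκ.1], fun a ha b hb c hc hab hbc => ?_⟩
  simp only [restrictTo, ha, hb, hc, and_self, if_true] at hab hbc ⊢
  exact hκ.2 a b c hab hbc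

variable [Fintype Δ]

def nonFuture (X : Δ) (κ : CRel Δ) : Finset (PVar Δ) :=
  pastSet κ (IVv X) ∪ elseSet κ (IVv X)

theorem IsSPO.mem_nonFuture_iff (hκ : IsSPO κ) {Y : PVar Δ} :
    Y ∈ nonFuture X κ ↔ Y ≠ IVv X ∧ κ (IVv X) Y = false := by
  simp only [nonFuture, pastSet, elseSet, mem_union, mem_filter, mem_univ, true_and]
  constructor
  · rintro (hY | ⟨hne, -, hXY⟩)
    · refine ⟨fun he => by simp [he, hκ.1] at hY, ?_⟩
      cases hXY : κ (IVv X) Y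
      · rfl
      · simpa [hκ.1] using hκ.2 _ _ _ hXY hY
    · exact ⟨hne, hXY⟩
  · rintro ⟨hne, hXY⟩
    cases hYX : κ Y (IVv X)
    · exact .inr ⟨hne, rfl, hXY⟩
    · exact .inl rfl

/-- The data on which the free-choice marginal `margFC` for `X` conditions; restricting `κ` makes
`cell X` constant on exactly the sets of orders that `margFC` sums over. -/
def cell (X : Δ) (κ : CRel Δ) : Finset (PVar Δ) × Finset (PVar Δ) × CRel Δ :=
  (pastSet κ (IVv X), elseSet κ (IVv X), restrictTo (nonFuture X κ) κ)

theorem cell_eq_cell_iff :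
    cell X κ = cell X κ' ↔ pastSet κ (IVv X) = pastSet κ' (IVv X) ∧
      elseSet κ (IVv X) = elseSet κ' (IVv X) ∧
      ∀ a ∈ nonFuture X κ', ∀ b ∈ nonFuture X κ', κ a b = restrictTo (nonFuture X κ') κ' a b := by
  simp only [cell, Prod.mk.injEq, and_congr_right_iff]
  intro hpast helse
  have hnf : nonFuture X κ = nonFuture X κ' := by simp only [nonFuture, hpast, helse]
  simp only [hnf, funext_iff, restrictTo]
  refine ⟨fun h a ha b hb => by simpa [ha, hb] using h a b, fun h a b => ?_⟩
  split_ifs with hab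
  · simpa [hab] using h a hab.1 b hab.2
  · rfl

theorem nonFuture_eq_of_cell_eq (h : cell X κ = cell X κ') : nonFuture X κ = nonFuture X κ' := by
  obtain ⟨hpast, helse, -⟩ := cell_eq_cell_iff.1 h
  simp only [nonFuture, hpast, helse]

theorem setting_row_eq_of_cell_eq (hκ : IsSPO κ) (hκ' : IsSPO κ') (h : cell X κ = cell X κ')
    (Y : PVar Δ) : κ (IVv X) Y = κ' (IVv X) Y := by
  by_cases hY : Y = IVv X
  · rw [hY, hκ.1, hκ'.1]
  have hiff := hκ.mem_nonFuture_iff (X := X) (Y := Y)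
  rw [nonFuture_eq_of_cell_eq h, hκ'.mem_nonFuture_iff] at hiff
  simpa [hY] using hiff.symm

theorem lt_of_cell_eq (hκ : IsSPO κ) (h : cell X κ = cell X κ') {a b : PVar Δ}
    (ha : a ≠ IVv X) (hb : b ≠ IVv X) (hXb : κ (IVv X) b = false) (hab : κ a b = true) :
    κ' a b = true := by
  have hXa : κ (IVv X) a = false := by
    cases hXa : κ (IVv X) a
    · rfl
    · simpa [hXb] using hκ.2 _ _ _ hXa hab
  obtain ⟨-, -, hrestr⟩ := cell_eq_cell_iff.1 h
  have hnf := nonFuture_eq_of_cell_eq h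
  have ha' : a ∈ nonFuture X κ' := hnf ▸ hκ.mem_nonFuture_iff.2 ⟨ha, hXa⟩
  have hb' : b ∈ nonFuture X κ' := hnf ▸ hκ.mem_nonFuture_iff.2 ⟨hb, hXb⟩
  simpa [hrestr a ha' b hb', restrictTo, ha', hb'] using hab

theorem IsClosedLabSPO.agreeOffSucc_of_cell_eq (hκ : IsClosedLabSPO κ)
    (hκ' : IsClosedLabSPO κ') (h : cell X κ = cell X κ') :
    AgreeOffSucc (fun W V => κ (XOv W) (XIv V) = true) (fun W V => κ' (XOv W) (XIv V) = true)
      X := by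
  have hrow := setting_row_eq_of_cell_eq hκ.1 hκ'.1 h
  refine ⟨fun V => ?_, fun W V hXV => ?_⟩
  · show κ (XOv X) (XIv V) = true ↔ κ' (XOv X) (XIv V) = true
    rw [← hκ.setting_lt_input_iff, ← hκ'.setting_lt_input_iff, hrow]
  have hXV : κ (IVv X) (XIv V) = false := by
    rw [← Bool.not_eq_true, hκ.setting_lt_input_iff]
    exact hXV
  have hO : XOv W ≠ IVv X := by simp [XOv, IVv]
  have hI : XIv V ≠ IVv X := by simp [XIv, IVv]
  exact ⟨lt_of_cell_eq hκ.1 h hO hI hXV, lt_of_cell_eq hκ'.1 h.symm hO hI (hrow _ ▸ hXV)⟩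

end Cells

section CoarseEvents

variable {Δ : Type} {κ κ' : CRel Δ} {X : Δ} {𝒳 : Finset Δ} {ξ₀ : Δ → Δ → Bool}

noncomputable def coarseBool (κ : CRel Δ) : Δ → Δ → Bool := fun Y Z => decide (coarse κ Y Z)

theorem coarseBool_eq_iff {ξ : Δ → Δ → Bool} :
    coarseBool κ = ξ ↔ ∀ Y Z, (coarse κ Y Z ↔ ξ Y Z = true) := by
  simp only [funext_iff, coarseBool]
  refine forall₂_congr fun Y Z => ?_
  cases ξ Y Z <;> simp

variable [Fintype Δ] [DecidableEq Δ]

theorem sum_sum_coarse_fiber {M : Type*} [AddCommMonoid M] (f : CRel Δ → M) :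
    ∑ ξ : Δ → Δ → Bool,
      ∑ κ ∈ univ.filter (fun κ : CRel Δ => ∀ Y Z : Δ, (coarse κ Y Z ↔ ξ Y Z = true)), f κ
      = ∑ κ, f κ := by
  simp_rw [← coarseBool_eq_iff]
  exact sum_fiberwise _ _ _

/-- The event on the coarse-grained order whose probability is `margCausal`. -/
def CausalEvent (X : Δ) (𝒳 : Finset Δ) (ξ₀ ξ : Δ → Δ → Bool) : Prop :=
  (∀ W ∈ 𝒳, ξ X W = false) ∧ ∀ a ∈ insert X 𝒳, ∀ b ∈ insert X 𝒳, ξ a b = ξ₀ a b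

theorem margCausal_eq_sum_causalEvent {ISet OSet : Δ → Type} [∀ X, Fintype (OSet X)]
    [∀ X, DecidableEq (OSet X)] (P : (∀ X, ISet X) → (∀ X, OSet X) → CRel Δ → ℝ)
    (i : ∀ X, ISet X) (o : ∀ X, OSet X) :
    margCausal P i o X 𝒳 ξ₀ =
      ∑ o' ∈ univ.filter (fun o' : ∀ X', OSet X' => ∀ W ∈ 𝒳, o' W = o W),
        ∑ κ ∈ univ.filter (fun κ => CausalEvent X 𝒳 ξ₀ (coarseBool κ)), P i o' κ := by
  unfold margCausal
  refine sum_congr rfl fun o' _ => ?_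
  simp_rw [← coarseBool_eq_iff]
  rw [sum_fiberwise_eq_sum_filter]
  exact sum_congr (filter_congr fun κ _ => by simp [CausalEvent]) fun _ _ => rfl

theorem IsClosedLabSPO.causalEvent_of_cell_eq (hκ : IsClosedLabSPO κ) (hκ' : IsClosedLabSPO κ')
    (h : cell X κ = cell X κ') (hξ₀ : ξ₀ X X = false)
    (hE : CausalEvent X 𝒳 ξ₀ (coarseBool κ)) : CausalEvent X 𝒳 ξ₀ (coarseBool κ') := by
  have hagree := hκ.agreeOffSucc_of_cell_eq hκ' h
  have hnot : ∀ b ∈ insert X 𝒳, ¬ coarse κ X b := by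
    intro b hb hXb
    rcases mem_insert.1 hb with rfl | hb𝒳
    · simpa [coarseBool, hXb, hξ₀] using hE.2 b hb b hb
    · simpa [coarseBool, hXb] using hE.1 b hb𝒳
  have heq : ∀ a ∈ insert X 𝒳, ∀ b ∈ insert X 𝒳, coarseBool κ' a b = coarseBool κ a b :=
    fun a _ b hb => decide_eq_decide.2 (hagree.transGen_iff (hnot b hb)).symm
  exact ⟨fun W hW => (heq X (mem_insert_self X 𝒳) W (mem_insert_of_mem hW)).trans (hE.1 W hW),
    fun a ha b hb => (heq a ha b hb).trans (hE.2 a ha b hb)⟩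

theorem IsClosedLabSPO.outcome_mem_nonFuture_of_causalEvent (hκ : IsClosedLabSPO κ)
    (hX𝒳 : X ∉ 𝒳) (hE : CausalEvent X 𝒳 ξ₀ (coarseBool κ)) {W : Δ} (hW : W ∈ 𝒳) :
    OVv W ∈ nonFuture X κ := by
  have hWX : W ≠ X := fun h => hX𝒳 (h ▸ hW)
  refine hκ.1.mem_nonFuture_iff.2 ⟨by simp [OVv, IVv, hWX], ?_⟩
  rw [← Bool.not_eq_true]
  intro hXW
  simpa [coarseBool, hκ.coarse_of_setting_lt_outcome hWX hXW] using hE.1 W hW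

noncomputable def causalCells (X : Δ) (𝒳 : Finset Δ) (ξ₀ : Δ → Δ → Bool) :
    Finset (Finset (PVar Δ) × Finset (PVar Δ) × CRel Δ) :=
  (univ.filter fun κ => IsClosedLabSPO κ ∧ CausalEvent X 𝒳 ξ₀ (coarseBool κ)).image (cell X)

theorem sum_causalEvent_eq_sum_causalCells {M : Type*} [AddCommMonoid M] (f : CRel Δ → M)
    (hf : ∀ κ, f κ ≠ 0 → IsClosedLabSPO κ) (hξ₀ : ξ₀ X X = false) :
    ∑ κ ∈ univ.filter (fun κ => CausalEvent X 𝒳 ξ₀ (coarseBool κ)), f κ =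
      ∑ c ∈ causalCells X 𝒳 ξ₀, ∑ κ ∈ univ.filter (fun κ => cell X κ = c), f κ := by
  rw [sum_fiberwise_eq_sum_filter univ (causalCells X 𝒳 ξ₀) (cell X) f, sum_filter, sum_filter]
  refine sum_congr rfl fun κ _ => ?_
  by_cases hfκ : f κ = 0
  · simp [hfκ]
  have hκ := hf κ hfκ
  refine if_congr ⟨fun hE => mem_image_of_mem _ (by simp [hκ, hE]), fun hc => ?_⟩ rfl rfl
  obtain ⟨κ', hκ', hcell⟩ := mem_image.1 hc
  simp only [mem_filter, mem_univ, true_and] at hκ'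
  exact hκ'.1.causalEvent_of_cell_eq hκ hcell hξ₀ hκ'.2

end CoarseEvents

section FreeChoice

variable {Δ : Type} [Fintype Δ] [DecidableEq Δ] {ISet OSet : Δ → Type}
  [∀ X, Fintype (OSet X)] [∀ X, DecidableEq (OSet X)]
  {P : (∀ X, ISet X) → (∀ X, OSet X) → CRel Δ → ℝ}

theorem margFC_eq_sum_cell (i : ∀ X, ISet X) (X : Δ) (κ' : CRel Δ) (o : ∀ X, OSet X) :
    margFC P i X (pastSet κ' (IVv X)) (elseSet κ' (IVv X)) (restrictTo (nonFuture X κ') κ') o =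
      ∑ o' ∈ univ.filter (fun o' : ∀ X', OSet X' => ∀ W, OVv W ∈ nonFuture X κ' → o' W = o W),
        ∑ κ ∈ univ.filter (fun κ => cell X κ = cell X κ'), P i o' κ := by
  unfold margFC
  exact sum_congr (filter_congr fun _ _ => Iff.rfl)
    fun _ _ => sum_congr (filter_congr fun _ _ => cell_eq_cell_iff.symm) fun _ _ => rfl

theorem FreeChoice.sum_cell_eq (hFC : FreeChoice P) {X : Δ} {𝒳 : Finset Δ} {κ' : CRel Δ}
    (hκ' : IsSPO κ') (h𝒳 : ∀ W ∈ 𝒳, OVv W ∈ nonFuture X κ') (o : ∀ X, OSet X)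
    {i i' : ∀ X, ISet X} (hii : ∀ W, W ≠ X → i W = i' W) :
    ∑ o' ∈ univ.filter (fun o' : ∀ X', OSet X' => ∀ W ∈ 𝒳, o' W = o W),
        ∑ κ ∈ univ.filter (fun κ => cell X κ = cell X κ'), P i o' κ =
      ∑ o' ∈ univ.filter (fun o' : ∀ X', OSet X' => ∀ W ∈ 𝒳, o' W = o W),
        ∑ κ ∈ univ.filter (fun κ => cell X κ = cell X κ'), P i' o' κ := by
  -- Split by the outcomes that `margFC` conditions on; each fibre is a free-choice marginal.
  refine sum_eq_sum_of_forall_sum_fiber_eq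
    (fun o' (W : {W // OVv W ∈ nonFuture X κ'}) => o' W) fun ob hob => ?_
  have hfiber : {o' ∈ univ.filter (fun o' : ∀ X', OSet X' => ∀ W ∈ 𝒳, o' W = o W) |
      (fun W : {W // OVv W ∈ nonFuture X κ'} => o' W) = fun W => ob W.1} =
      univ.filter (fun o' : ∀ X', OSet X' => ∀ W, OVv W ∈ nonFuture X κ' → o' W = ob W) := by
    ext o'
    simp only [mem_filter, mem_univ, true_and, funext_iff, Subtype.forall] at hob ⊢
    exact ⟨fun h => h.2, fun h => ⟨fun W hW => (h W (h𝒳 W hW)).trans (hob W hW), h⟩⟩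
  have hIpast : IVv X ∉ pastSet κ' (IVv X) := by simp [pastSet, hκ'.1]
  have hIelse : IVv X ∉ elseSet κ' (IVv X) := by simp [elseSet]
  have hdisj : Disjoint (pastSet κ' (IVv X)) (elseSet κ' (IVv X)) := by
    simp +contextual [disjoint_left, pastSet, elseSet]
  rw [hfiber, ← margFC_eq_sum_cell, ← margFC_eq_sum_cell]
  exact hFC X _ _ hIpast hIelse hdisj _ (hκ'.isSPOOn_restrictTo _) ob i i' hii

end FreeChoice

theorem marginal_correlation_is_causal_general
    {Δ : Type} [Fintype Δ] [DecidableEq Δ]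
    {ISet OSet : Δ → Type}
    [∀ X, Fintype (OSet X)] [∀ X, DecidableEq (OSet X)]
    (P : (∀ X, ISet X) → (∀ X, OSet X) → CRel Δ → ℝ)
    (hPos : ∀ i o κ, 0 ≤ P i o κ)
    (hSupp : ∀ i o κ, P i o κ ≠ 0 → IsSPO κ)
    (hFC : FreeChoice P)
    (hCL : ClosedLab P) :
    -- (a) the coarse-grained distribution marginalises to `P(o | i)`
    (∀ (i : ∀ X, ISet X) (o : ∀ X, OSet X),
      (∑ ξ : Δ → Δ → Bool,
        ∑ κ ∈ Finset.univ.filter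
            (fun κ : CRel Δ => ∀ Y Z : Δ, (coarse κ Y Z ↔ ξ Y Z = true)),
          P i o κ)
        = ∑ κ : CRel Δ, P i o κ) ∧
    -- (b) it witnesses causality of the marginal correlation
    (∀ (X : Δ) (𝒳 : Finset Δ), X ∉ 𝒳 →
      ∀ ξ₀ : Δ → Δ → Bool,
        ((∀ a ∈ insert X 𝒳, ξ₀ a a = false) ∧
          ∀ a ∈ insert X 𝒳, ∀ b ∈ insert X 𝒳, ∀ c ∈ insert X 𝒳,
            ξ₀ a b = true → ξ₀ b c = true → ξ₀ a c = true) →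
        ∀ (o : ∀ X', OSet X') (i i' : ∀ X', ISet X'),
          (∀ W, W ≠ X → i W = i' W) →
          margCausal P i o X 𝒳 ξ₀ = margCausal P i' o X 𝒳 ξ₀) := by
  have hadm : ∀ i o κ, P i o κ ≠ 0 → IsClosedLabSPO κ := fun i o κ h =>
    ⟨hSupp i o κ h, hCL.1 i o κ ((hPos i o κ).lt_of_ne' h)⟩
  refine ⟨fun i o => sum_sum_coarse_fiber (P i o), fun X 𝒳 hX𝒳 ξ₀ hξ₀ o i i' hii => ?_⟩
  have hXX : ξ₀ X X = false := hξ₀.1 X (mem_insert_self X 𝒳)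
  simp only [margCausal_eq_sum_causalEvent,
    sum_causalEvent_eq_sum_causalCells _ (hadm _ _) hXX]
  rw [sum_comm, sum_comm (γ := ∀ X', OSet X')]
  refine sum_congr rfl fun c hc => ?_
  obtain ⟨κ', hκ', rfl⟩ := mem_image.1 hc
  simp only [mem_filter, mem_univ, true_and] at hκ'
  exact hFC.sum_cell_eq hκ'.1.1
    (fun W => hκ'.1.outcome_mem_nonFuture_of_causalEvent hX𝒳 hκ'.2) o hii

/-- if the family of distributions `P(o, κ | i)` satisfies the free choice
and closed laboratories assumptions, then the marginal correlation
`P(o | i) = Σ_κ P(o, κ | i)` is a causal correlation, witnessed by the coarse-grained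
distribution `P(o, ξ | i) := Σ_{κ : 𝒞_κ = ξ} P(o, κ | i)`: the latter marginalises to
`P(o | i)`, and for every party `X`, every subset `𝒳 ⊆ Δ \ {X}` and every SPO `ξ₀` on
`{X} ∪ 𝒳`, the probability that no element of `𝒳` lies in the causal future of `X`, that
the causal order on `{X} ∪ 𝒳` is `ξ₀`, and that the parties in `𝒳` display specified
outcomes, does not depend on the value of `i_X`. -/
theorem marginal_correlation_is_causal
    {Δ : Type} [Fintype Δ] [DecidableEq Δ]
    {ISet OSet : Δ → Type}
    [∀ X, Fintype (ISet X)] [∀ X, DecidableEq (ISet X)] [∀ X, Nonempty (ISet X)]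
    [∀ X, Fintype (OSet X)] [∀ X, DecidableEq (OSet X)]
    (P : (∀ X, ISet X) → (∀ X, OSet X) → CRel Δ → ℝ)
    (hPos : ∀ i o κ, 0 ≤ P i o κ)
    (hNorm : ∀ i, (∑ o : ∀ X, OSet X, ∑ κ : CRel Δ, P i o κ) = 1)
    (hSupp : ∀ i o κ, P i o κ ≠ 0 → IsSPO κ)
    (hFC : FreeChoice P)
    (hCL : ClosedLab P) :
    -- (a) the coarse-grained distribution marginalises to `P(o | i)`
    (∀ (i : ∀ X, ISet X) (o : ∀ X, OSet X),
      (∑ ξ : Δ → Δ → Bool,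
        ∑ κ ∈ Finset.univ.filter
            (fun κ : CRel Δ => ∀ Y Z : Δ, (coarse κ Y Z ↔ ξ Y Z = true)),
          P i o κ)
        = ∑ κ : CRel Δ, P i o κ) ∧
    -- (b) it witnesses causality of the marginal correlation
    (∀ (X : Δ) (𝒳 : Finset Δ), X ∉ 𝒳 →
      ∀ ξ₀ : Δ → Δ → Bool,
        ((∀ a ∈ insert X 𝒳, ξ₀ a a = false) ∧
          ∀ a ∈ insert X 𝒳, ∀ b ∈ insert X 𝒳, ∀ c ∈ insert X 𝒳,
            ξ₀ a b = true → ξ₀ b c = true → ξ₀ a c = true) →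
        ∀ (o : ∀ X', OSet X') (i i' : ∀ X', ISet X'),
          (∀ W, W ≠ X → i W = i' W) →
          margCausal P i o X 𝒳 ξ₀ = margCausal P i' o X 𝒳 ξ₀) :=
  marginal_correlation_is_causal_general P hPos hSupp hFC hCL
end

section
/- Suppose the family of distributions P(o, κ | i) over outcome assignments o and strict partial orders κ on Γ satisfies the free choice and closed laboratories assumptions. Then for every party X ∈ Δ and every setting assignment i, the total probability that I_X is in the causal past of X_I vanishes: Σ_o Σ_{κ : I_X ≺ X_I} P(o, κ | i) = 0. -/
open Finset

/-- if the family of distributions `P(o, κ | i)` satisfies the free choice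
and closed laboratories assumptions, then for every party `X` and every setting
assignment `i`, the total probability that `I_X` is in the causal past of `X_I`
vanishes: `Σ_o Σ_{κ : I_X ≺ X_I} P(o, κ | i) = 0`. -/
theorem setting_never_precedes_input
    {Δ : Type} [Fintype Δ] [DecidableEq Δ]
    {ISet OSet : Δ → Type}
    [∀ X, Fintype (ISet X)] [∀ X, DecidableEq (ISet X)] [∀ X, Nonempty (ISet X)]
    [∀ X, Fintype (OSet X)] [∀ X, DecidableEq (OSet X)]
    (P : (∀ X, ISet X) → (∀ X, OSet X) → CRel Δ → ℝ)
    (hPos : ∀ i o κ, 0 ≤ P i o κ)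
    (hNorm : ∀ i, (∑ o : ∀ X, OSet X, ∑ κ : CRel Δ, P i o κ) = 1)
    (hSupp : ∀ i o κ, P i o κ ≠ 0 → IsSPO κ)
    (hFC : FreeChoice P)
    (hCL : ClosedLab P) :
    ∀ (X : Δ) (i : ∀ X', ISet X'),
      (∑ o : ∀ X', OSet X',
        ∑ κ ∈ Finset.univ.filter (fun κ : CRel Δ => κ (IVv X) (XIv X) = true),
          P i o κ) = 0 := by
  intro X i
  have key : ∀ (o : ∀ X', OSet X') (κ : CRel Δ), κ (IVv X) (XIv X) = true →
      P i o κ = 0 := by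
    intro o κ hκ
    by_contra hne
    have hpos : 0 < P i o κ := lt_of_le_of_ne (hPos i o κ) (Ne.symm hne)
    have hspo := hSupp i o κ hne
    obtain ⟨istar, histar⟩ := hCL.2 X
    set 𝒴 := pastSet κ (IVv X) with h𝒴
    set 𝒵 := elseSet κ (IVv X) with h𝒵
    have hXInotY : XIv X ∉ 𝒴 := by
      simp only [h𝒴, pastSet, Finset.mem_filter, Finset.mem_univ, true_and]
      intro h
      have := hspo.2 _ _ _ hκ h
      rw [hspo.1 (IVv X)] at this
      exact Bool.false_ne_true this
    have hXInotZ : XIv X ∉ 𝒵 := by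
      simp only [h𝒵, elseSet, Finset.mem_filter, Finset.mem_univ, true_and]
      intro h
      rw [hκ] at h
      exact absurd h.2.2 (by decide)
    have h1 : IVv X ∉ 𝒴 := by
      simp only [h𝒴, pastSet, Finset.mem_filter, Finset.mem_univ, true_and]
      rw [hspo.1 (IVv X)]; exact Bool.false_ne_true
    have h2 : IVv X ∉ 𝒵 := by
      simp only [h𝒵, elseSet, Finset.mem_filter, Finset.mem_univ, true_and]
      intro h; exact h.1 rfl
    have h3 : Disjoint 𝒴 𝒵 := by
      rw [Finset.disjoint_left]
      intro a ha hb
      simp only [h𝒴, pastSet, Finset.mem_filter, Finset.mem_univ, true_and] at ha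
      simp only [h𝒵, elseSet, Finset.mem_filter, Finset.mem_univ, true_and] at hb
      rw [ha] at hb
      exact absurd hb.2.1 (by decide)
    have hSPOOn : IsSPOOn κ (𝒴 ∪ 𝒵) :=
      ⟨fun a _ => hspo.1 a, fun a _ b _ c _ hab hbc => hspo.2 a b c hab hbc⟩
    set i' : ∀ X', ISet X' := Function.update i X istar with hi'
    have hfc := hFC X 𝒴 𝒵 h1 h2 h3 κ hSPOOn o i i'
      (fun X' hX' => (Function.update_of_ne hX' istar i).symm)
    have hmem_o : o ∈ Finset.univ.filter
        (fun o' : ∀ X', OSet X' => ∀ X', OVv X' ∈ 𝒴 ∪ 𝒵 → o' X' = o X') := by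
      simp
    have hmem_κ : κ ∈ Finset.univ.filter (fun κ' : CRel Δ =>
        pastSet κ' (IVv X) = 𝒴 ∧ elseSet κ' (IVv X) = 𝒵 ∧
        ∀ a ∈ 𝒴 ∪ 𝒵, ∀ b ∈ 𝒴 ∪ 𝒵, κ' a b = κ a b) := by
      exact Finset.mem_filter.mpr ⟨Finset.mem_univ _, rfl, rfl, fun a _ b _ => rfl⟩
    have hmarg_pos : 0 < margFC P i X 𝒴 𝒵 κ o := by
      unfold margFC
      refine Finset.sum_pos' (fun o' _ => Finset.sum_nonneg fun κ' _ => hPos i o' κ')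
        ⟨o, hmem_o, Finset.sum_pos' (fun κ' _ => hPos i o κ') ⟨κ, hmem_κ, hpos⟩⟩
    rw [hfc] at hmarg_pos
    have hmarg_ne : margFC P i' X 𝒴 𝒵 κ o ≠ 0 := ne_of_gt hmarg_pos
    unfold margFC at hmarg_ne
    obtain ⟨o', ho'mem, ho'⟩ := Finset.exists_ne_zero_of_sum_ne_zero hmarg_ne
    obtain ⟨κ', hκ'mem, hκ'⟩ := Finset.exists_ne_zero_of_sum_ne_zero ho'
    simp only [Finset.mem_filter, Finset.mem_univ, true_and] at hκ'mem
    have hpos' : 0 < P i' o' κ' := lt_of_le_of_ne (hPos i' o' κ') (Ne.symm hκ')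
    have hspo' := hSupp i' o' κ' hκ'
    have hstruct' := hCL.1 i' o' κ' hpos'
    have hXIO : κ' (XIv X) (XOv X) = true :=
      histar i' o' κ' (Function.update_self X istar i) hpos'
    -- κ' (XIv X) (IVv X) = false
    have hnotpast : κ' (XIv X) (IVv X) = false := by
      have : XIv X ∉ pastSet κ' (IVv X) := hκ'mem.1 ▸ hXInotY
      simp only [pastSet, Finset.mem_filter, Finset.mem_univ, true_and] at this
      exact Bool.not_eq_true _ ▸ (by simpa using this)
    -- κ' (IVv X) (XIv X) = true
    have hIX : κ' (IVv X) (XIv X) = true := by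
      by_contra h
      have hfalse : κ' (IVv X) (XIv X) = false := by
        cases hb : κ' (IVv X) (XIv X) with
        | false => rfl
        | true => exact absurd hb h
      have : XIv X ∈ elseSet κ' (IVv X) := by
        simp only [elseSet, Finset.mem_filter, Finset.mem_univ, true_and]
        refine ⟨?_, hnotpast, hfalse⟩
        simp [XIv, IVv]
      rw [hκ'mem.2.1] at this
      exact hXInotZ this
    have hOXI : κ' (XOv X) (XIv X) = true := by
      rcases (hstruct' X (XIv X)).1.mp hIX with h | h | h
      · exact absurd h (by simp [XIv, OVv])
      · exact absurd h (by simp [XIv, XOv])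
      · exact h
    have : κ' (XOv X) (XOv X) = true := hspo'.2 _ _ _ hOXI hXIO
    rw [hspo'.1 (XOv X)] at this
    exact Bool.false_ne_true this
  refine Finset.sum_eq_zero fun o _ => Finset.sum_eq_zero fun κ hκ => ?_
  simp only [Finset.mem_filter, Finset.mem_univ, true_and] at hκ
  exact key o κ hκ
end
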